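/- arXiv:2202.13423 — 7 statements merged into one kernel-verified Lean document; each statement's English description precedes it below -/
import Mathlib

section
/- Let (X,d) be a metric space and let {S_n} and S be nonempty compact subsets of X, all having the same finite cardinality k. Then the directed Hausdorff distance d⃗_H(S, S_n) → 0 if and only if d_H(S_n, S) → 0 in the (symmetric) Hausdorff metric. -/
/-!
The bound `d⃗_H(T, S) ≤ d_H(S, T)` gives one direction. For the other, the points of the finite
set `T` are pairwise at distance at least some `δ > 0`. Once `r := d⃗_H(T, S) < δ / 2`, sending
each point of `T` to a nearest point of `S` is injective, hence onto `S` because `S` has no more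
points than `T`; so every point of `S` is also within `r` of `T`, and `d_H(S, T) ≤ r`.
-/

open Filter MeasureTheory Topology TopologicalSpace Metric Set

noncomputable section

/-- Directed Hausdorff distance `sup_{x ∈ S} inf_{x' ∈ T} d(x,x')`. -/
def dirHaus {X : Type*} [MetricSpace X] (S T : Set X) : ℝ :=
  ⨆ x ∈ S, infDist x T

/-- Kuratowski lower limit of a sequence of sets. -/
def KurLi {Y : Type*} [TopologicalSpace Y] (A : ℕ → Set Y) : Set Y :=
  {x | ∀ U ∈ nhds x, ∀ᶠ n in atTop, (U ∩ A n).Nonempty}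

/-- Kuratowski upper limit of a sequence of sets. -/
def KurLs {Y : Type*} [TopologicalSpace Y] (A : ℕ → Set Y) : Set Y :=
  {x | ∀ U ∈ nhds x, ∃ᶠ n in atTop, (U ∩ A n).Nonempty}

section DirHaus

variable {X : Type*} [MetricSpace X]

lemma dirHaus_nonneg (S T : Set X) : 0 ≤ dirHaus S T :=
  Real.iSup_nonneg fun _ => Real.iSup_nonneg fun _ => infDist_nonneg

lemma dirHaus_le {S T : Set X} {r : ℝ} (hr : 0 ≤ r) (h : ∀ x ∈ S, infDist x T ≤ r) :
    dirHaus S T ≤ r :=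
  Real.iSup_le (fun x => Real.iSup_le (fun hx => h x hx) hr) hr

lemma infDist_le_dirHaus {S T : Set X} (hS : S.Finite) {x : X} (hx : x ∈ S) :
    infDist x T ≤ dirHaus S T := by
  have hbdd : BddAbove (range fun y => ⨆ _ : y ∈ S, infDist y T) := by
    refine (((hS.image (infDist · T)).insert 0).bddAbove).mono ?_
    rintro _ ⟨y, rfl⟩
    by_cases hy : y ∈ S
    · simp only [hy, ciSup_unique]
      exact Or.inr ⟨y, hy, rfl⟩
    · simp [hy]
  exact (le_ciSup (f := fun _ : x ∈ S => infDist x T) (finite_range _).bddAbove hx).trans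
    (le_ciSup hbdd x)

lemma dirHaus_le_hausdorffDist {S T : Set X} (hS : Bornology.IsBounded S) (hT : Bornology.IsBounded T) :
    dirHaus T S ≤ hausdorffDist S T := by
  refine dirHaus_le hausdorffDist_nonneg fun x hx => ?_
  rcases S.eq_empty_or_nonempty with rfl | hSne
  · rw [infDist_empty]
    exact hausdorffDist_nonneg
  rw [hausdorffDist_comm]
  exact infDist_le_hausdorffDist_of_mem hx
    (hausdorffEDist_ne_top_of_nonempty_of_bounded ⟨x, hx⟩ hSne hT hS)

lemma hausdorffDist_le_dirHaus_of_lt_einfsep {S T : Set X} (hS : S.Finite) (hT : T.Finite)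
    (hcard : S.ncard ≤ T.ncard) (hsmall : ENNReal.ofReal (2 * dirHaus T S) < T.einfsep) :
    hausdorffDist S T ≤ dirHaus T S := by
  set r := dirHaus T S
  rcases S.eq_empty_or_nonempty with rfl | hSne
  · rw [hausdorffDist_comm, hausdorffDist_empty]
    exact dirHaus_nonneg _ _
  have hnear : ∀ t ∈ T, ∃ y ∈ S, dist t y ≤ r := fun t ht => by
    obtain ⟨y, hy, hty⟩ := hS.isCompact.exists_infDist_eq_dist hSne t
    exact ⟨y, hy, hty ▸ infDist_le_dirHaus hT ht⟩
  choose! f hfS hfr using hnear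
  have hinj : InjOn f T := by
    intro a ha b hb hab
    by_contra hne
    have hab_le : dist a b ≤ 2 * r :=
      calc dist a b ≤ dist a (f a) + dist b (f b) := hab ▸ dist_triangle_right _ _ _
        _ ≤ 2 * r := by linarith [hfr a ha, hfr b hb]
    refine (hsmall.trans_le (einfsep_le_edist_of_mem ha hb hne)).not_ge ?_
    rw [edist_dist]
    exact ENNReal.ofReal_le_ofReal hab_le
  have himg : f '' T = S :=
    eq_of_subset_of_ncard_le (image_subset_iff.2 hfS)
      (by rwa [hinj.ncard_image]) hS
  refine hausdorffDist_le_of_mem_dist (dirHaus_nonneg _ _) ?_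
    fun t ht => ⟨f t, hfS t ht, hfr t ht⟩
  rw [← himg]
  rintro _ ⟨t, ht, rfl⟩
  exact ⟨t, ht, dist_comm t (f t) ▸ hfr t ht⟩

end DirHaus

theorem stmt3_general {X : Type*} [MetricSpace X] (S : ℕ → Set X) (T : Set X) (k : ℕ)
    (hSfin : ∀ n, (S n).Finite) (hScard : ∀ n, (S n).ncard = k)
    (hTfin : T.Finite) (hTcard : T.ncard = k) :
    Tendsto (fun n => dirHaus T (S n)) atTop (𝓝 0) ↔
      Tendsto (fun n => hausdorffDist (S n) T) atTop (𝓝 0) := by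
  constructor
  · intro h
    have hsmall : ∀ᶠ n in atTop, ENNReal.ofReal (2 * dirHaus T (S n)) < T.einfsep := by
      have h2 : Tendsto (fun n => ENNReal.ofReal (2 * dirHaus T (S n))) atTop (𝓝 0) := by
        simpa using ENNReal.tendsto_ofReal (h.const_mul 2)
      exact h2.eventually (gt_mem_nhds hTfin.einfsep_pos)
    refine squeeze_zero' (.of_forall fun _ => hausdorffDist_nonneg) ?_ h
    filter_upwards [hsmall] with n hn
    exact hausdorffDist_le_dirHaus_of_lt_einfsep (hSfin n) hTfin (by rw [hScard, hTcard]) hn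
  · exact squeeze_zero (fun _ => dirHaus_nonneg _ _)
      (fun n => dirHaus_le_hausdorffDist (hSfin n).isBounded hTfin.isBounded)

/-- For sets of the same finite cardinality `k ≥ 1`, lower Hausdorff convergence is
equivalent to convergence in the Hausdorff metric. -/
theorem stmt3 {X : Type*} [MetricSpace X] (S : ℕ → Set X) (T : Set X) (k : ℕ) (hk : 1 ≤ k)
    (hSfin : ∀ n, (S n).Finite) (hScard : ∀ n, (S n).ncard = k)
    (hTfin : T.Finite) (hTcard : T.ncard = k) :
    Tendsto (fun n => dirHaus T (S n)) atTop (𝓝 0) ↔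
      Tendsto (fun n => hausdorffDist (S n) T) atTop (𝓝 0) :=
  stmt3_general S T k hSfin hScard hTfin hTcard
end
end

section
/- If (X,d) is a metric space with the Heine–Borel property (every closed ball is compact), then the space of nonempty compact subsets of X endowed with the Hausdorff metric also has the Heine–Borel property. -/
open TopologicalSpace

open Set Metric EMetric in
/-- If `X` has the Heine–Borel property (is proper), then the hyperspace of nonempty
compact subsets of `X`, with the Hausdorff metric, also has the Heine–Borel property. -/
theorem stmt4 {X : Type*} [MetricSpace X] [ProperSpace X] :
    ProperSpace (NonemptyCompacts X) := by
  constructor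
  intro s r
  rcases lt_or_ge r 0 with hr | hr
  · rw [Metric.closedBall_eq_empty.2 hr]; exact isCompact_empty
  set K : Set X := Metric.cthickening r (s : Set X) with hKdef
  have hK : IsCompact K := s.isCompact.cthickening
  have : CompactSpace K := isCompact_iff_compactSpace.1 hK
  -- the map from nonempty compacts of K to nonempty compacts of X
  let f : NonemptyCompacts K → NonemptyCompacts X := fun t =>
    ⟨⟨Subtype.val '' (t : Set K), t.isCompact.image continuous_subtype_val⟩,
      t.nonempty.image _⟩
  have hf : Isometry f := by
    intro t t'
    simp only [edist_dist, NonemptyCompacts.dist_eq]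
    congr 1
    exact Metric.hausdorffDist_image isometry_subtype_coe
  have hrange : Metric.closedBall s r ⊆ f '' Set.univ := by
    intro t ht
    have htK : (t : Set X) ⊆ K := by
      intro x hx
      rw [hKdef, Metric.mem_cthickening_iff]
      calc EMetric.infEdist x (s : Set X) ≤ hausdorffEdist (t : Set X) (s : Set X) :=
            EMetric.infEdist_le_hausdorffEdist_of_mem hx
        _ = edist t s := rfl
        _ ≤ ENNReal.ofReal r := by
            rw [edist_dist]
            exact ENNReal.ofReal_le_ofReal (Metric.mem_closedBall.1 ht)
    refine ⟨⟨⟨Subtype.val ⁻¹' (t : Set X), ?_⟩, ?_⟩, Set.mem_univ _, ?_⟩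
    · have : IsClosed (Subtype.val ⁻¹' (t : Set X) : Set K) :=
        t.isCompact.isClosed.preimage continuous_subtype_val
      exact this.isCompact
    · obtain ⟨x, hx⟩ := t.nonempty
      exact ⟨⟨x, htK hx⟩, hx⟩
    · apply NonemptyCompacts.ext
      simp only [f, NonemptyCompacts.coe_mk, Compacts.coe_mk]
      rw [Subtype.image_preimage_coe]
      exact Set.inter_eq_right.2 htK
  have hcomp : IsCompact (f '' Set.univ) :=
    CompactSpace.isCompact_univ.image hf.continuous
  exact hcomp.of_isClosed_subset Metric.isClosed_closedBall hrange
end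

section
/- Let (X,d) be a metric space, p ≥ 1, and let μ_n, μ be Borel probability measures on X with finite p-th moments. If μ_n → μ in the p-Wasserstein sense (i.e., μ_n → μ weakly and ∫ d(x,y)^p dμ_n(y) → ∫ d(x,y)^p dμ(y) for some x ∈ X), then for every nonempty compact set S ⊆ X, W_p(S, μ_n) → W_p(S, μ), where W_p(S, ν) := ∫_X min_{x∈S} d(x,y)^p dν(y). -/
open Filter MeasureTheory Topology TopologicalSpace Metric Set

noncomputable section

variable {X : Type*} [MetricSpace X] [MeasurableSpace X]

/-- The clustering cost `W_p(S,μ) = ∫ d(y,S)^p dμ(y)`. -/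
def Wp (p : ℝ) (S : Set X) (μ : Measure X) : ℝ :=
  ∫ y, infDist y S ^ p ∂μ

/-- `μ` has a finite `p`-th moment. -/
def FinMom (p : ℝ) (μ : Measure X) : Prop :=
  ∃ x : X, Integrable (fun y => dist x y ^ p) μ

/-- Convergence in the `p`-Wasserstein topology: weak convergence together with
convergence of the `p`-th moments about some point. -/
def WassTendsto (p : ℝ) (μ : ℕ → Measure X) (ν : Measure X) : Prop :=
  (∀ f : BoundedContinuousFunction X ℝ,
      Tendsto (fun n => ∫ y, f y ∂ μ n) atTop (𝓝 (∫ y, f y ∂ ν))) ∧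
  ∃ x : X, Tendsto (fun n => ∫ y, dist x y ^ p ∂ μ n) atTop (𝓝 (∫ y, dist x y ^ p ∂ ν))

/-- `S` is a feasible set of cluster centers: a nonempty finite subset of `R`
with at most `k` points. -/
def Feas (k : ℕ) (R S : Set X) : Prop :=
  S ⊆ R ∧ S.Finite ∧ S.Nonempty ∧ S.ncard ≤ k

/-- The optimal clustering cost `m_{k,p}(μ,R)`. -/
def mCost (p : ℝ) (μ : Measure X) (k : ℕ) (R : Set X) : ℝ :=
  sInf ((fun S => Wp p S μ) '' {S | Feas k R S})

/-- The set of optimal cluster-center sets `C_p(μ,k,R)`, viewed as a subset of the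
hyperspace of nonempty compact subsets of `X` with the Hausdorff metric. -/
def Cp (p : ℝ) (μ : Measure X) (k : ℕ) (R : Set X) : Set (NonemptyCompacts X) :=
  {S | Feas k R (S : Set X) ∧ ∀ T : Set X, Feas k R T → Wp p (S : Set X) μ ≤ Wp p T μ}

/-- The support of a measure on a metric space. -/
def measSupp (μ : Measure X) : Set X :=
  {x | ∀ r : ℝ, 0 < r → μ (Metric.ball x r) ≠ 0}


lemma two_rpow_add_le {p a b : ℝ} (hp : 1 ≤ p) (ha : 0 ≤ a) (hb : 0 ≤ b) :
    (a + b) ^ p ≤ 2 ^ p * a ^ p + 2 ^ p * b ^ p := by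
  have hp0 : (0:ℝ) ≤ p := by linarith
  have h1 : a + b ≤ 2 * max a b := by
    rcases le_total a b with h | h
    · rw [max_eq_right h]; linarith
    · rw [max_eq_left h]; linarith
  have h2 : (a + b) ^ p ≤ (2 * max a b) ^ p :=
    Real.rpow_le_rpow (by positivity) h1 hp0
  rw [Real.mul_rpow (by norm_num) (le_max_of_le_left ha)] at h2
  refine h2.trans ?_
  rcases le_total a b with h | h
  · rw [max_eq_right h]
    have := Real.rpow_nonneg ha p
    have h2p : (0:ℝ) ≤ 2 ^ p := by positivity
    nlinarith
  · rw [max_eq_left h]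
    have := Real.rpow_nonneg hb p
    have h2p : (0:ℝ) ≤ 2 ^ p := by positivity
    nlinarith

lemma integrable_rpow_comp {X : Type*} [MetricSpace X] [MeasurableSpace X] [BorelSpace X]
    {μ : Measure X} [IsProbabilityMeasure μ] {p : ℝ} (hp : 1 ≤ p)
    {x : X} (hx : Integrable (fun y => dist x y ^ p) μ)
    {h : X → ℝ} (hcont : Continuous h) (h0 : ∀ y, 0 ≤ h y) {c : ℝ} (hc0 : 0 ≤ c)
    (hle : ∀ y, h y ≤ dist x y + c) :
    Integrable (fun y => h y ^ p) μ := by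
  have hp0 : (0:ℝ) ≤ p := by linarith
  refine Integrable.mono' ((hx.const_mul (2^p)).add (integrable_const (2^p * c^p)))
    ((Real.continuous_rpow_const hp0).comp hcont).aestronglyMeasurable ?_
  filter_upwards with y
  rw [Real.norm_eq_abs, abs_of_nonneg (Real.rpow_nonneg (h0 y) p)]
  calc h y ^ p ≤ (dist x y + c) ^ p := Real.rpow_le_rpow (h0 y) (hle y) hp0
    _ ≤ 2 ^ p * dist x y ^ p + 2 ^ p * c ^ p := two_rpow_add_le hp dist_nonneg hc0

def truncPow {X : Type*} [MetricSpace X] (h : X → ℝ) (hcont : Continuous h)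
    (h0 : ∀ y, 0 ≤ h y) (p R : ℝ) (hp : 0 ≤ p) (hR : 0 ≤ R) :
    BoundedContinuousFunction X ℝ where
  toFun := fun y => min (h y) R ^ p
  continuous_toFun := (Real.continuous_rpow_const hp).comp (hcont.min continuous_const)
  map_bounded' := by
    refine ⟨R ^ p, fun a b => ?_⟩
    have key : ∀ y : X, 0 ≤ min (h y) R ^ p ∧ min (h y) R ^ p ≤ R ^ p := fun y =>
      ⟨Real.rpow_nonneg (le_min (h0 y) hR) p,
       Real.rpow_le_rpow (le_min (h0 y) hR) (min_le_right _ _) hp⟩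
    have ka := key a; have kb := key b
    rw [Real.dist_eq, abs_sub_le_iff]
    constructor <;> linarith [ka.1, ka.2, kb.1, kb.2]

@[simp] lemma truncPow_apply {X : Type*} [MetricSpace X] (h : X → ℝ) (hcont : Continuous h)
    (h0 : ∀ y, 0 ≤ h y) (p R : ℝ) (hp : 0 ≤ p) (hR : 0 ≤ R) (y : X) :
    truncPow h hcont h0 p R hp hR y = min (h y) R ^ p := rfl

/-- If `μ_n → μ` in the `p`-Wasserstein sense, then `W_p(S,μ_n) → W_p(S,μ)` for every
nonempty compact set `S`. -/
theorem stmt6 {X : Type*} [MetricSpace X] [MeasurableSpace X] [BorelSpace X]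
    (p : ℝ) (hp : 1 ≤ p) (μ : ℕ → Measure X) (ν : Measure X)
    [∀ n, IsProbabilityMeasure (μ n)] [IsProbabilityMeasure ν]
    (hμ : ∀ n, FinMom p (μ n)) (hν : FinMom p ν) (hconv : WassTendsto p μ ν) :
    ∀ S : Set X, IsCompact S → S.Nonempty →
      Tendsto (fun n => Wp p S (μ n)) atTop (𝓝 (Wp p S ν)) := by
  intro S hS hSne
  obtain ⟨hweak, x₀, hmom⟩ := hconv
  have hp0 : (0:ℝ) ≤ p := by linarith
  obtain ⟨M, hMS⟩ := hS.isBounded.subset_closedBall x₀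
  obtain ⟨s₀, hs₀⟩ := hSne
  have hM0 : 0 ≤ M := le_trans dist_nonneg (mem_closedBall.mp (hMS hs₀))
  have hdistc : Continuous (fun y => dist x₀ y) := continuous_const.dist continuous_id
  have hinfc : Continuous (fun y : X => infDist y S) := continuous_infDist_pt S
  -- key distance bound
  have hinf_le : ∀ y : X, infDist y S ≤ dist x₀ y + M := by
    intro y
    have h1 : infDist y S ≤ infDist x₀ S + dist y x₀ := infDist_le_infDist_add_dist
    have h2 : infDist x₀ S ≤ dist x₀ s₀ := infDist_le_dist_of_mem hs₀
    have h3 : dist x₀ s₀ ≤ M := by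
      have := mem_closedBall.mp (hMS hs₀); rw [dist_comm]; exact this
    rw [dist_comm] at h1
    linarith
  -- integrability
  have int_g : ∀ (m : Measure X) [IsProbabilityMeasure m], FinMom p m →
      Integrable (fun y => dist x₀ y ^ p) m := by
    intro m _ ⟨x₁, hx₁⟩
    exact integrable_rpow_comp hp hx₁ hdistc (fun y => dist_nonneg) dist_nonneg
      (fun y => by linarith [dist_triangle x₀ x₁ y, dist_comm x₀ x₁])
  have int_f : ∀ (m : Measure X) [IsProbabilityMeasure m],
      Integrable (fun y => dist x₀ y ^ p) m → Integrable (fun y => infDist y S ^ p) m :=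
    fun m _ h => integrable_rpow_comp hp h hinfc (fun y => infDist_nonneg) hM0 hinf_le
  have int_gν : Integrable (fun y => dist x₀ y ^ p) ν := int_g ν hν
  have int_gμ : ∀ n, Integrable (fun y => dist x₀ y ^ p) (μ n) := fun n => int_g (μ n) (hμ n)
  have int_fν : Integrable (fun y => infDist y S ^ p) ν := int_f ν int_gν
  have int_fμ : ∀ n, Integrable (fun y => infDist y S ^ p) (μ n) := fun n => int_f (μ n) (int_gμ n)
  -- tail of ν tends to 0
  have tail_ν : Tendsto (fun k : ℕ => ∫ y, (dist x₀ y ^ p - min (dist x₀ y) (k:ℝ) ^ p) ∂ν)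
      atTop (𝓝 0) := by
    have h0' : (0:ℝ) = ∫ _y, (0:ℝ) ∂ν := by simp
    rw [h0']
    apply tendsto_integral_of_dominated_convergence (fun y => dist x₀ y ^ p)
    · intro k
      exact (((Real.continuous_rpow_const hp0).comp hdistc).sub
        ((Real.continuous_rpow_const hp0).comp (hdistc.min continuous_const))).aestronglyMeasurable
    · exact int_gν
    · intro k
      filter_upwards with y
      have h1 : min (dist x₀ y) (k:ℝ) ^ p ≤ dist x₀ y ^ p :=
        Real.rpow_le_rpow (le_min dist_nonneg (Nat.cast_nonneg k)) (min_le_left _ _) hp0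
      have h2 : 0 ≤ min (dist x₀ y) (k:ℝ) ^ p :=
        Real.rpow_nonneg (le_min dist_nonneg (Nat.cast_nonneg k)) p
      rw [Real.norm_eq_abs, abs_of_nonneg (by linarith)]
      linarith
    · filter_upwards with y
      have : (fun k : ℕ => dist x₀ y ^ p - min (dist x₀ y) (k:ℝ) ^ p) =ᶠ[atTop]
          fun _ => (0:ℝ) := by
        filter_upwards [eventually_ge_atTop ⌈dist x₀ y⌉₊] with k hk
        have hdk : dist x₀ y ≤ (k:ℝ) := le_trans (Nat.le_ceil _) (by exact_mod_cast hk)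
        rw [min_eq_left hdk, sub_self]
      exact Tendsto.congr' this.symm tendsto_const_nhds
  rw [Metric.tendsto_atTop]
  intro ε hε
  have hC : (0:ℝ) < 2 ^ p * 2 := by positivity
  have h1 : ∀ᶠ k : ℕ in atTop,
      (2^p*2) * (∫ y, (dist x₀ y ^ p - min (dist x₀ y) (k:ℝ) ^ p) ∂ν) < ε/4 :=
    (by simpa using tail_ν.const_mul (2^p*2) :
      Tendsto (fun k : ℕ => (2^p*2) * ∫ y, (dist x₀ y ^ p - min (dist x₀ y) (k:ℝ) ^ p) ∂ν)
        atTop (𝓝 0)).eventually_lt_const (by linarith)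
  obtain ⟨k₀, hk₀tail, hk₀M⟩ := (h1.and (eventually_ge_atTop ⌈M⌉₊)).exists
  set T : ℝ := (k₀ : ℝ) with hTdef
  have hTM : M ≤ T := le_trans (Nat.le_ceil _) (Nat.cast_le.mpr hk₀M)
  have hT0 : 0 ≤ T := le_trans hM0 hTM
  set R : ℝ := M + 2*T with hRdef
  have hR0 : 0 ≤ R := by positivity
  set F := truncPow (fun y : X => infDist y S) hinfc (fun y => infDist_nonneg) p R hp0 hR0 with hF
  set G := truncPow (fun y : X => dist x₀ y) hdistc (fun y => dist_nonneg) p T hp0 hT0 with hG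
  -- pointwise key inequality
  have key : ∀ y : X, 0 ≤ infDist y S ^ p - F y ∧
      infDist y S ^ p - F y ≤ (2^p*2) * (dist x₀ y ^ p - G y) := by
    intro y
    rw [hF, hG, truncPow_apply, truncPow_apply]
    have hGle : min (dist x₀ y) T ^ p ≤ dist x₀ y ^ p :=
      Real.rpow_le_rpow (le_min dist_nonneg hT0) (min_le_left _ _) hp0
    by_cases hy : infDist y S ≤ R
    · rw [min_eq_left hy, sub_self]
      exact ⟨le_refl 0, mul_nonneg hC.le (by linarith)⟩
    · push_neg at hy
      have hdl : 2*T ≤ dist x₀ y := by linarith [hinf_le y]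
      have hTd : T ≤ dist x₀ y := by linarith
      rw [min_eq_right hy.le, min_eq_right hTd]
      constructor
      · exact sub_nonneg.2 (Real.rpow_le_rpow hR0 hy.le hp0)
      · have e1 : infDist y S ^ p ≤ (dist x₀ y + M) ^ p :=
          Real.rpow_le_rpow infDist_nonneg (hinf_le y) hp0
        have e2 : (dist x₀ y + M) ^ p ≤ (2 * dist x₀ y) ^ p :=
          Real.rpow_le_rpow (by linarith [dist_nonneg (x := x₀) (y := y)]) (by linarith) hp0
        have e3 : (2 * dist x₀ y) ^ p = 2 ^ p * dist x₀ y ^ p :=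
          Real.mul_rpow (by norm_num) dist_nonneg
        have e4 : T ^ p ≤ dist x₀ y ^ p / 2 := by
          have h5 : T ^ p ≤ (dist x₀ y / 2) ^ p :=
            Real.rpow_le_rpow hT0 (by linarith) hp0
          have h6 : (dist x₀ y / 2) ^ p = dist x₀ y ^ p / 2 ^ p :=
            Real.div_rpow dist_nonneg (by norm_num) p
          have h7 : (2:ℝ) ≤ 2 ^ p := by
            calc (2:ℝ) = 2 ^ (1:ℝ) := (Real.rpow_one 2).symm
              _ ≤ 2 ^ p := Real.rpow_le_rpow_left_iff (by norm_num) |>.2 hp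
          have h8 : dist x₀ y ^ p / 2 ^ p ≤ dist x₀ y ^ p / 2 := by
            gcongr
          linarith
        have e5 : (2^p*2) * T ^ p ≤ (2^p*2) * (dist x₀ y ^ p / 2) :=
          mul_le_mul_of_nonneg_left e4 hC.le
        have hRp : 0 ≤ R ^ p := Real.rpow_nonneg hR0 p
        rw [mul_sub]
        linarith
  -- integral estimates
  have diff_bound : ∀ (m : Measure X) [IsProbabilityMeasure m],
      Integrable (fun y => dist x₀ y ^ p) m → Integrable (fun y => infDist y S ^ p) m →
      (0 ≤ (∫ y, infDist y S ^ p ∂m) - ∫ y, F y ∂m ∧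
       (∫ y, infDist y S ^ p ∂m) - (∫ y, F y ∂m) ≤
        (2^p*2) * ((∫ y, dist x₀ y ^ p ∂m) - ∫ y, G y ∂m)) := by
    intro m _ hg hf
    have hFint : Integrable (⇑F) m := F.integrable m
    have hGint : Integrable (⇑G) m := G.integrable m
    rw [← integral_sub hf hFint, ← integral_sub hg hGint, ← integral_const_mul]
    exact ⟨integral_nonneg fun y => (key y).1,
      integral_mono (hf.sub hFint) ((hg.sub hGint).const_mul _) fun y => (key y).2⟩
  have hGeq : (fun y : X => min (dist x₀ y) T ^ p) = ⇑G := by funext y; rfl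
  have hν4 : (2^p*2) * ((∫ y, dist x₀ y ^ p ∂ν) - ∫ y, G y ∂ν) < ε/4 := by
    have : (∫ y, (dist x₀ y ^ p - min (dist x₀ y) T ^ p) ∂ν) =
        (∫ y, dist x₀ y ^ p ∂ν) - ∫ y, G y ∂ν := by
      rw [integral_sub int_gν]
      · rw [hGeq]
      · rw [hGeq]; exact G.integrable ν
    rw [← this]
    exact hk₀tail
  have htail : Tendsto (fun n => (∫ y, dist x₀ y ^ p ∂μ n) - ∫ y, G y ∂μ n) atTop
      (𝓝 ((∫ y, dist x₀ y ^ p ∂ν) - ∫ y, G y ∂ν)) := hmom.sub (hweak G)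
  have ev2 : ∀ᶠ n in atTop,
      (2^p*2) * ((∫ y, dist x₀ y ^ p ∂μ n) - ∫ y, G y ∂μ n) < ε/2 :=
    (htail.const_mul (2^p*2)).eventually_lt_const (by linarith)
  have hFconv := hweak F
  rw [Metric.tendsto_atTop] at hFconv
  obtain ⟨N₁, hN₁⟩ := hFconv (ε/4) (by linarith)
  obtain ⟨N₂, hN₂⟩ := eventually_atTop.mp ev2
  refine ⟨max N₁ N₂, fun n hn => ?_⟩
  have h1n := hN₁ n (le_trans (le_max_left _ _) hn)
  have h2n := hN₂ n (le_trans (le_max_right _ _) hn)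
  rw [Real.dist_eq] at h1n
  have habs := abs_lt.mp h1n
  obtain ⟨hb1, hb2⟩ := diff_bound (μ n) (int_gμ n) (int_fμ n)
  obtain ⟨hc1, hc2⟩ := diff_bound ν int_gν int_fν
  simp only [Wp, Real.dist_eq]
  rw [abs_lt]
  constructor <;> linarith
end
end

section
/- Let (X,d) be a metric space, p ≥ 1, μ ∈ P_p(X), k ∈ ℕ, and R ⊆ X closed. Then the set C_p(μ,k,R) of optimal cluster center sets — i.e., sets S ⊆ R with 1 ≤ #S ≤ k minimizing W_p(S,μ) = ∫ min_{x∈S} d(x,y)^p dμ(y) over all such sets — is closed in the space K(X) of nonempty compact subsets of X with the Hausdorff metric. -/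
open Filter MeasureTheory Topology TopologicalSpace Metric Set

noncomputable section

variable {X : Type*} [MetricSpace X] [MeasurableSpace X]

/-!
Feasibility of `K` means `K ⊆ R` and `#K ≤ k`. Both conditions are closed in the Vietoris
(= Hausdorff metric) topology: the first because `R` is closed, the second because `k + 1`
points of `K` have pairwise disjoint neighbourhoods, each of which is still met by every `L`
close to `K`. The cost `K ↦ W_p(K, μ)` is continuous on `K(X)`, by dominated convergence:
`K ↦ d(y, K)` is `1`-Lipschitz for the Hausdorff metric, and near `K₀ ∋ s₀` it is dominated
by `d(x₀, y) + d(x₀, s₀) + 1`, whose `p`-th power is integrable by the moment assumption.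
Hence `C_p(μ, k, R)` is a closed set intersected with sublevel sets of a continuous function.
-/

theorem Set.encard_le_encard_of_pairwiseDisjoint_of_inter_nonempty {α β : Type*}
    {s : Set α} {t : Set β} {U : α → Set β} (hU : s.PairwiseDisjoint U)
    (hmeet : ∀ x ∈ s, (t ∩ U x).Nonempty) : s.encard ≤ t.encard := by
  rcases s.eq_empty_or_nonempty with rfl | ⟨x, hx⟩
  · simp
  have : Nonempty β := ⟨(hmeet x hx).some⟩
  choose! g hgt hgU using hmeet
  refine encard_le_encard_of_injOn hgt fun x hx y hy hxy => ?_
  by_contra hne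
  exact Set.disjoint_left.1 (hU hx hy hne) (hgU x hx) (hxy ▸ hgU y hy)

theorem TopologicalSpace.NonemptyCompacts.isOpen_setOf_lt_encard {α : Type*}
    [TopologicalSpace α] [T2Space α] (k : ℕ) :
    IsOpen {K : NonemptyCompacts α | k < (K : Set α).encard} := by
  refine isOpen_iff_forall_mem_open.2 fun K hK => ?_
  obtain ⟨F, hFK, hF⟩ := exists_subset_encard_eq (Order.add_one_le_of_lt hK)
  have hFfin : F.Finite := finite_of_encard_eq_coe hF
  obtain ⟨U, hU, hdisj⟩ := hFfin.t2_separation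
  refine ⟨⋂ x ∈ F, {L | ((L : Set α) ∩ U x).Nonempty}, fun L hL => ?_,
    hFfin.isOpen_biInter fun x _ => isOpen_inter_nonempty_of_isOpen (hU x).2,
    mem_iInter₂.2 fun x hx => ⟨x, hFK hx, (hU x).1⟩⟩
  calc (k : ℕ∞) < k + 1 := by norm_cast; omega
    _ = F.encard := hF.symm
    _ ≤ (L : Set α).encard :=
      encard_le_encard_of_pairwiseDisjoint_of_inter_nonempty hdisj (mem_iInter₂.1 hL)

theorem feas_iff {α : Type*} {k : ℕ} {R S : Set α} (hS : S.Nonempty) :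
    Feas k R S ↔ S ⊆ R ∧ S.encard ≤ k := by
  simp only [Feas, encard_le_coe_iff_finite_ncard_le, hS, true_and]

theorem isClosed_setOf_feas {α : Type*} [TopologicalSpace α] [T2Space α] (k : ℕ) {R : Set α}
    (hR : IsClosed R) : IsClosed {K : NonemptyCompacts α | Feas k R (K : Set α)} := by
  simp only [feas_iff (NonemptyCompacts.nonempty _), ofPred_and]
  refine (NonemptyCompacts.isClosed_subsets_of_isClosed hR).inter ?_
  convert (NonemptyCompacts.isOpen_setOf_lt_encard (α := α) k).isClosed_compl using 1
  ext K
  simp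

theorem Real.add_rpow_le_two_rpow_mul {a b p : ℝ} (ha : 0 ≤ a) (hb : 0 ≤ b) (hp : 0 ≤ p) :
    (a + b) ^ p ≤ 2 ^ p * (a ^ p + b ^ p) := by
  have hmax : max a b ^ p ≤ a ^ p + b ^ p := by
    rcases le_total a b with h | h
    · simpa [max_eq_right h] using Real.rpow_nonneg ha p
    · simpa [max_eq_left h] using Real.rpow_nonneg hb p
  calc (a + b) ^ p ≤ (2 * max a b) ^ p :=
        Real.rpow_le_rpow (by positivity) (by linarith [le_max_left a b, le_max_right a b]) hp
    _ = 2 ^ p * max a b ^ p := Real.mul_rpow zero_le_two (le_max_of_le_left ha)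
    _ ≤ 2 ^ p * (a ^ p + b ^ p) := by gcongr

theorem continuous_Wp [OpensMeasurableSpace X] {p : ℝ} (hp : 0 ≤ p) {μ : Measure X}
    [IsFiniteMeasure μ] (hμ : FinMom p μ) :
    Continuous fun K : NonemptyCompacts X => Wp p (K : Set X) μ := by
  obtain ⟨x₀, hx₀⟩ := hμ
  refine continuous_iff_continuousAt.2 fun K₀ => ?_
  obtain ⟨s₀, hs₀⟩ := K₀.nonempty
  set c := dist x₀ s₀ + 1
  have hdom : ∀ K ∈ ball K₀ 1, ∀ y, infDist y (K : Set X) ≤ dist x₀ y + c := fun K hK y =>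
    calc infDist y (K : Set X) ≤ infDist y (K₀ : Set X) + dist K₀ K :=
          infDist_le_infDist_add_hausdorffDist (edist_ne_top K₀ K)
      _ ≤ dist y s₀ + 1 := add_le_add (infDist_le_dist_of_mem hs₀) (mem_ball'.1 hK).le
      _ ≤ dist x₀ y + c := by linarith [dist_triangle y x₀ s₀, dist_comm y x₀]
  refine continuousAt_of_dominated (bound := fun y => 2 ^ p * (dist x₀ y ^ p + c ^ p))
    (Eventually.of_forall fun K => ?_) ?_ ((hx₀.add (integrable_const _)).const_mul _)
    (Eventually.of_forall fun y => ?_)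
  · exact ((continuous_infDist_pt _).rpow_const fun _ => Or.inr hp).aestronglyMeasurable
  · filter_upwards [ball_mem_nhds K₀ one_pos] with K hK
    refine Eventually.of_forall fun y => ?_
    rw [Real.norm_of_nonneg (Real.rpow_nonneg infDist_nonneg p)]
    calc infDist y (K : Set X) ^ p ≤ (dist x₀ y + c) ^ p :=
          Real.rpow_le_rpow infDist_nonneg (hdom K hK y) hp
      _ ≤ 2 ^ p * (dist x₀ y ^ p + c ^ p) :=
          Real.add_rpow_le_two_rpow_mul dist_nonneg (by positivity) hp
  · exact (lipschitz_infDist_set y).continuous.continuousAt.rpow_const (Or.inr hp)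

/-- The set `C_p(μ,k,R)` of optimal cluster-center sets is closed in the hyperspace
`K(X)` of nonempty compact subsets of `X` with the Hausdorff metric. -/
theorem stmt8 {X : Type*} [MetricSpace X] [MeasurableSpace X] [BorelSpace X]
    (p : ℝ) (hp : 1 ≤ p) (μ : Measure X) [IsProbabilityMeasure μ] (hμ : FinMom p μ)
    (k : ℕ) (R : Set X) (hR : IsClosed R) :
    IsClosed (Cp p μ k R) := by
  have hCp : Cp p μ k R = {K : NonemptyCompacts X | Feas k R (K : Set X)} ∩
      ⋂ T ∈ {T : Set X | Feas k R T},
        {K : NonemptyCompacts X | Wp p (K : Set X) μ ≤ Wp p T μ} := by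
    ext K
    simp [Cp]
  rw [hCp]
  exact (isClosed_setOf_feas k hR).inter <| isClosed_biInter fun T _ =>
    isClosed_le (continuous_Wp (zero_le_one.trans hp) hμ) continuous_const
end
end

section
/- Let (X,d) be a metric space and p ≥ 1. Suppose μ_n → μ in the p-Wasserstein topology on P_p(X), k_n = k for all sufficiently large n, and the closed sets R_n converge to the closed set R in the Kuratowski sense (Li_n R_n = Ls_n R_n = R). Then the Kuratowski upper limit (in the Hausdorff-metric space K(X)) of the sets of optimal cluster-center sets satisfies Ls_n C_p(μ_n, k_n, R_n) ⊆ C_p(μ, k, R). -/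
open Filter MeasureTheory Topology TopologicalSpace Metric Set

noncomputable section

variable {X : Type*} [MetricSpace X] [MeasurableSpace X]

namespace StmtAux

lemma rpow_le_add_of_le_max {p a c d : ℝ} (hp : 0 < p) (ha : 0 ≤ a)
    (hc : 0 ≤ c) (hd : 0 ≤ d) (h : a ≤ max c d) : a ^ p ≤ c ^ p + d ^ p := by
  calc a ^ p ≤ max c d ^ p := Real.rpow_le_rpow ha h hp.le
  _ ≤ c ^ p + d ^ p := by
      rcases le_total c d with h' | h'
      · rw [max_eq_right h']; exact le_add_of_nonneg_left (Real.rpow_nonneg hc _)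
      · rw [max_eq_left h']; exact le_add_of_nonneg_right (Real.rpow_nonneg hd _)

lemma add_rpow_le_two {p a b : ℝ} (hp : 0 < p) (ha : 0 ≤ a) (hb : 0 ≤ b) :
    (a + b) ^ p ≤ (2 * a) ^ p + (2 * b) ^ p := by
  refine rpow_le_add_of_le_max hp (by positivity) (by positivity) (by positivity) ?_
  rcases le_total a b with h | h
  · exact le_max_of_le_right (by linarith)
  · exact le_max_of_le_left (by linarith)

lemma add_le_max_delta {d e δ : ℝ} (hδ : 0 < δ) :
    d + e ≤ max ((1 + δ) * d) ((1 + 1/δ) * e) := by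
  rcases le_total e (δ * d) with h | h
  · refine le_max_of_le_left (by nlinarith)
  · refine le_max_of_le_right ?_
    have hd : d ≤ e / δ := by rw [le_div_iff₀ hδ]; nlinarith
    have h1 : (1 + 1/δ) * e = e/δ + e := by field_simp; ring
    rw [h1]; linarith

lemma continuous_rpow_const {p : ℝ} (hp : 0 < p) : Continuous (fun t : ℝ => t ^ p) :=
  continuous_iff_continuousAt.2 fun x => Real.continuousAt_rpow_const x p (Or.inr hp.le)

variable {X : Type*} [MetricSpace X] [MeasurableSpace X] [OpensMeasurableSpace X]

lemma integrable_growth {μ : Measure X} [IsProbabilityMeasure μ] {h g : X → ℝ}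
    (hc : Continuous h) (h0 : ∀ y, 0 ≤ h y) {a b : ℝ} (hg : Integrable g μ)
    (hb : ∀ y, h y ≤ a * g y + b) : Integrable h μ :=
  ((hg.const_mul a).add (integrable_const b)).mono' hc.aestronglyMeasurable
    (Filter.Eventually.of_forall fun y => by
      simp only [Pi.add_apply]
      rw [Real.norm_eq_abs, abs_of_nonneg (h0 y)]
      exact hb y)

omit [MeasurableSpace X] [OpensMeasurableSpace X] in
lemma continuous_dist_rpow {p : ℝ} (hp : 1 ≤ p) (x₀ : X) :
    Continuous (fun y => dist x₀ y ^ p) :=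
  (continuous_rpow_const (lt_of_lt_of_le one_pos hp)).comp (continuous_const.dist continuous_id)

lemma finmom_all {p : ℝ} (hp : 1 ≤ p) {μ : Measure X} [IsProbabilityMeasure μ]
    (h : FinMom p μ) (x₀ : X) : Integrable (fun y => dist x₀ y ^ p) μ := by
  obtain ⟨x₁, hx₁⟩ := h
  have hp0 : (0:ℝ) < p := lt_of_lt_of_le one_pos hp
  refine integrable_growth (continuous_dist_rpow hp x₀) (fun y => Real.rpow_nonneg dist_nonneg _)
    (a := 2 ^ p) (b := (2 * dist x₀ x₁) ^ p) hx₁ (fun y => ?_)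
  have h1 : dist x₀ y ≤ dist x₀ x₁ + dist x₁ y := dist_triangle _ _ _
  calc dist x₀ y ^ p ≤ (dist x₀ x₁ + dist x₁ y) ^ p :=
        Real.rpow_le_rpow dist_nonneg h1 hp0.le
  _ ≤ (2 * dist x₀ x₁) ^ p + (2 * dist x₁ y) ^ p :=
        add_rpow_le_two hp0 dist_nonneg dist_nonneg
  _ = 2 ^ p * dist x₁ y ^ p + (2 * dist x₀ x₁) ^ p := by
        rw [Real.mul_rpow (by norm_num : (0:ℝ) ≤ 2) dist_nonneg,
            Real.mul_rpow (by norm_num : (0:ℝ) ≤ 2) dist_nonneg]; ring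

lemma integrable_infDist_rpow {p : ℝ} (hp : 1 ≤ p) {μ : Measure X} [IsProbabilityMeasure μ]
    (h : FinMom p μ) {S : Set X} (hS : S.Nonempty) :
    Integrable (fun y => infDist y S ^ p) μ := by
  obtain ⟨s₀, hs₀⟩ := hS
  have hp0 : (0:ℝ) < p := lt_of_lt_of_le one_pos hp
  refine integrable_growth ?_ (fun y => Real.rpow_nonneg infDist_nonneg _)
    (a := 1) (b := 0) (finmom_all hp h s₀) (fun y => ?_)
  · exact (continuous_rpow_const hp0).comp (continuous_infDist_pt S)
  · rw [one_mul, add_zero, dist_comm]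
    exact Real.rpow_le_rpow infDist_nonneg (infDist_le_dist_of_mem hs₀) hp0.le

lemma norm_min_le {t K : ℝ} (ht : 0 ≤ t) : ‖min t K‖ ≤ |K| := by
  rw [Real.norm_eq_abs, abs_le]
  exact ⟨le_min ((neg_nonpos.2 (abs_nonneg K)).trans ht) (neg_abs_le K),
    (min_le_right _ _).trans (le_abs_self K)⟩

lemma integrable_min_const {μ : Measure X} [IsProbabilityMeasure μ] {g : X → ℝ}
    (hgc : Continuous g) (hg0 : ∀ y, 0 ≤ g y) (K : ℝ) :
    Integrable (fun y => min (g y) K) μ :=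
  (integrable_const |K|).mono' (hgc.min continuous_const).aestronglyMeasurable
    (Filter.Eventually.of_forall fun y => norm_min_le (hg0 y))

lemma tendsto_integral_growth {μ : ℕ → Measure X} {ν : Measure X}
    [∀ n, IsProbabilityMeasure (μ n)] [IsProbabilityMeasure ν]
    (hweak : ∀ f : BoundedContinuousFunction X ℝ,
      Tendsto (fun n => ∫ y, f y ∂ μ n) atTop (𝓝 (∫ y, f y ∂ ν)))
    {g : X → ℝ} (hgc : Continuous g) (hg0 : ∀ y, 0 ≤ g y)
    (hgν : Integrable g ν) (hgμ : ∀ n, Integrable g (μ n))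
    (hgconv : Tendsto (fun n => ∫ y, g y ∂ μ n) atTop (𝓝 (∫ y, g y ∂ ν)))
    {h : X → ℝ} (hc : Continuous h) (h0 : ∀ y, 0 ≤ h y)
    {a b : ℝ} (ha : 0 < a) (hb : ∀ y, h y ≤ a * g y + b) :
    Tendsto (fun n => ∫ y, h y ∂ μ n) atTop (𝓝 (∫ y, h y ∂ ν)) := by
  have hhν : Integrable h ν := integrable_growth hc h0 hgν hb
  have hhμ : ∀ n, Integrable h (μ n) := fun n => integrable_growth hc h0 (hgμ n) hb
  rw [Metric.tendsto_atTop]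
  intro ε hε
  set ε' : ℝ := ε / (8 * (a + 1)) with hε'def
  have hε' : 0 < ε' := by positivity
  -- monotone convergence for truncations of g
  have hmct : Tendsto (fun K : ℕ => ∫ y, min (g y) (K : ℝ) ∂ν) atTop (𝓝 (∫ y, g y ∂ν)) := by
    apply integral_tendsto_of_tendsto_of_monotone
      (fun K => integrable_min_const hgc hg0 _) hgν
    · exact Filter.Eventually.of_forall fun y K K' hKK' =>
        min_le_min le_rfl (Nat.cast_le.2 hKK')
    · exact Filter.Eventually.of_forall fun y =>
        tendsto_atTop_of_eventually_const (i₀ := ⌈g y⌉₊) fun K hK =>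
          min_eq_left ((Nat.le_ceil _).trans (Nat.cast_le.2 hK))
  obtain ⟨K0, hK0⟩ := Metric.tendsto_atTop.1 hmct ε' hε'
  have hK0' := hK0 K0 le_rfl
  set c : ℝ := (K0 : ℝ) with hcdef
  set M : ℝ := a * c + b with hMdef
  -- pointwise tail bound
  have key : ∀ y, h y - min (h y) M ≤ a * (g y - min (g y) c) := by
    intro y
    rcases le_or_gt (h y) M with hy | hy
    · rw [min_eq_left hy]
      have h1 : min (g y) c ≤ g y := min_le_left _ _
      nlinarith
    · rw [min_eq_right hy.le]
      have hgy : c ≤ g y := by nlinarith [hb y]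
      rw [min_eq_right hgy]
      have := hb y; linarith
  -- bounded continuous truncations
  set f1 : BoundedContinuousFunction X ℝ :=
    BoundedContinuousFunction.ofNormedAddCommGroup (fun y => min (h y) M)
      (hc.min continuous_const) |M| (fun y => norm_min_le (h0 y)) with hf1
  set f2 : BoundedContinuousFunction X ℝ :=
    BoundedContinuousFunction.ofNormedAddCommGroup (fun y => min (g y) c)
      (hgc.min continuous_const) |c| (fun y => norm_min_le (hg0 y)) with hf2
  have hw1 : Tendsto (fun n => ∫ y, min (h y) M ∂ μ n) atTop (𝓝 (∫ y, min (h y) M ∂ν)) := by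
    simpa [hf1, BoundedContinuousFunction.coe_ofNormedAddCommGroup] using hweak f1
  have hw2 : Tendsto (fun n => ∫ y, min (g y) c ∂ μ n) atTop (𝓝 (∫ y, min (g y) c ∂ν)) := by
    simpa [hf2, BoundedContinuousFunction.coe_ofNormedAddCommGroup] using hweak f2
  have e1 : ∀ᶠ n in atTop,
      dist (∫ y, min (h y) M ∂ μ n) (∫ y, min (h y) M ∂ν) < ε' := by
    obtain ⟨N, hN⟩ := Metric.tendsto_atTop.1 hw1 ε' hε'
    exact eventually_atTop.2 ⟨N, hN⟩
  have e2 : ∀ᶠ n in atTop, dist (∫ y, g y ∂ μ n) (∫ y, g y ∂ν) < ε' := by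
    obtain ⟨N, hN⟩ := Metric.tendsto_atTop.1 hgconv ε' hε'
    exact eventually_atTop.2 ⟨N, hN⟩
  have e3 : ∀ᶠ n in atTop,
      dist (∫ y, min (g y) c ∂ μ n) (∫ y, min (g y) c ∂ν) < ε' := by
    obtain ⟨N, hN⟩ := Metric.tendsto_atTop.1 hw2 ε' hε'
    exact eventually_atTop.2 ⟨N, hN⟩
  rw [eventually_atTop] at e1 e2 e3
  obtain ⟨N1, hN1⟩ := e1; obtain ⟨N2, hN2⟩ := e2; obtain ⟨N3, hN3⟩ := e3
  refine ⟨max N1 (max N2 N3), fun n hn => ?_⟩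
  have h1 := hN1 n (le_trans (le_max_left _ _) hn)
  have h2 := hN2 n (le_trans ((le_max_left _ _).trans (le_max_right _ _)) hn)
  have h3 := hN3 n (le_trans ((le_max_right _ _).trans (le_max_right _ _)) hn)
  rw [Real.dist_eq] at h1 h2 h3 hK0' ⊢
  rw [abs_lt] at h1 h2 h3 hK0'
  -- tail bounds for each measure
  have tailbound : ∀ (m : Measure X), IsProbabilityMeasure m → Integrable h m → Integrable g m →
      (0 ≤ (∫ y, h y ∂m) - ∫ y, min (h y) M ∂m ∧
       (∫ y, h y ∂m) - (∫ y, min (h y) M ∂m) ≤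
          a * ((∫ y, g y ∂m) - ∫ y, min (g y) c ∂m)) := by
    intro m hm hhm hgm
    have i1 : Integrable (fun y => min (h y) M) m := integrable_min_const hc h0 _
    have i2 : Integrable (fun y => min (g y) c) m := integrable_min_const hgc hg0 _
    constructor
    · have : (∫ y, min (h y) M ∂m) ≤ ∫ y, h y ∂m :=
        integral_mono i1 hhm (fun y => min_le_left _ _)
      linarith
    · have e : (∫ y, h y ∂m) - (∫ y, min (h y) M ∂m) =
          ∫ y, (h y - min (h y) M) ∂m := (integral_sub hhm i1).symm
      have e' : a * ((∫ y, g y ∂m) - (∫ y, min (g y) c ∂m)) =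
          ∫ y, a * (g y - min (g y) c) ∂m := by
        rw [← integral_sub hgm i2]
        exact (integral_const_mul _ _).symm
      rw [e, e']
      exact integral_mono (hhm.sub i1) ((hgm.sub i2).const_mul a) key
  obtain ⟨tm0, tm1⟩ := tailbound (μ n) inferInstance (hhμ n) (hgμ n)
  obtain ⟨tv0, tv1⟩ := tailbound ν inferInstance hhν hgν
  have hεeq : ε' * (8 * (a + 1)) = ε := by rw [hε'def]; field_simp
  have hGn : (∫ y, g y ∂ μ n) - (∫ y, min (g y) c ∂ μ n) ≤ 3 * ε' := by
    linarith [h2.2, h3.1, hK0'.1]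
  have hAn : (∫ y, h y ∂ μ n) - (∫ y, min (h y) M ∂ μ n) ≤ a * (3 * ε') :=
    tm1.trans (mul_le_mul_of_nonneg_left hGn ha.le)
  have hAv : (∫ y, h y ∂ν) - (∫ y, min (h y) M ∂ν) ≤ a * ε' :=
    tv1.trans (mul_le_mul_of_nonneg_left (by linarith [hK0'.1]) ha.le)
  rw [abs_lt]
  constructor
  · nlinarith [tm0, h1.1, hAv, hε', mul_pos ha hε']
  · nlinarith [hAn, h1.2, tv0, hε', mul_pos ha hε']


lemma wp_tendsto {p : ℝ} (hp : 1 ≤ p) {μ : ℕ → Measure X} {ν : Measure X}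
    [∀ n, IsProbabilityMeasure (μ n)] [IsProbabilityMeasure ν]
    (hμ : ∀ n, FinMom p (μ n)) (hν : FinMom p ν) (hconv : WassTendsto p μ ν)
    {φ : ℕ → ℕ} (hφ : StrictMono φ)
    {F : ℕ → Set X} {F₀ : Set X}
    (hFfin : ∀ j, (F j).Finite) (hFne : ∀ j, (F j).Nonempty)
    (hF₀fin : F₀.Finite) (hF₀ne : F₀.Nonempty)
    (hd : Tendsto (fun j => hausdorffDist (F j) F₀) atTop (𝓝 0)) :
    Tendsto (fun j => Wp p (F j) (μ (φ j))) atTop (𝓝 (Wp p F₀ ν)) := by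
  have hp0 : (0:ℝ) < p := lt_of_lt_of_le one_pos hp
  obtain ⟨x₀, hconv2⟩ := hconv.2
  have hweak := hconv.1
  set g : X → ℝ := fun y => dist x₀ y ^ p with hg
  have hgc : Continuous g := continuous_dist_rpow hp x₀
  have hg0 : ∀ y, 0 ≤ g y := fun y => Real.rpow_nonneg dist_nonneg _
  have hgν : Integrable g ν := finmom_all hp hν x₀
  have hgμ : ∀ n, Integrable g (μ n) := fun n => finmom_all hp (hμ n) x₀
  obtain ⟨s₀, hs₀⟩ := hF₀ne
  have hVconv : Tendsto (fun n => ∫ y, infDist y F₀ ^ p ∂ μ n) atTop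
      (𝓝 (∫ y, infDist y F₀ ^ p ∂ν)) := by
    apply tendsto_integral_growth hweak hgc hg0 hgν hgμ hconv2
      ((continuous_rpow_const hp0).comp (continuous_infDist_pt F₀))
      (fun y => Real.rpow_nonneg infDist_nonneg _)
      (a := 2 ^ p) (b := (2 * dist x₀ s₀) ^ p) (by positivity) (fun y => ?_)
    calc infDist y F₀ ^ p ≤ (dist x₀ y + dist x₀ s₀) ^ p := by
          apply Real.rpow_le_rpow infDist_nonneg ?_ hp0.le
          calc infDist y F₀ ≤ dist y s₀ := infDist_le_dist_of_mem hs₀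
          _ ≤ dist y x₀ + dist x₀ s₀ := dist_triangle _ _ _
          _ = dist x₀ y + dist x₀ s₀ := by rw [dist_comm]
    _ ≤ (2 * dist x₀ y) ^ p + (2 * dist x₀ s₀) ^ p :=
          add_rpow_le_two hp0 dist_nonneg dist_nonneg
    _ = 2 ^ p * g y + (2 * dist x₀ s₀) ^ p := by
          rw [Real.mul_rpow (by norm_num : (0:ℝ) ≤ 2) dist_nonneg]
  have hV : Tendsto (fun j => ∫ y, infDist y F₀ ^ p ∂ μ (φ j)) atTop
      (𝓝 (∫ y, infDist y F₀ ^ p ∂ν)) := hVconv.comp hφ.tendsto_atTop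
  set L : ℝ := ∫ y, infDist y F₀ ^ p ∂ν with hL
  have hL0 : 0 ≤ L := integral_nonneg fun y => Real.rpow_nonneg infDist_nonneg _
  have hedist : ∀ j, EMetric.hausdorffEdist (F j) F₀ ≠ ⊤ := fun j =>
    Metric.hausdorffEdist_ne_top_of_nonempty_of_bounded (hFne j) ⟨s₀, hs₀⟩
      (hFfin j).isBounded hF₀fin.isBounded
  rw [Metric.tendsto_atTop]
  intro ε hε
  set γ : ℝ := ε / (4 * (L + 1 + ε)) with hγdef
  have hγ : 0 < γ := by positivity
  have hγeq : γ * (4 * (L + 1 + ε)) = ε := by rw [hγdef]; field_simp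
  obtain ⟨δ, hδpos, hδ⟩ : ∃ δ > 0, (1 + δ) ^ p ≤ 1 + γ := by
    have hcont : ContinuousAt (fun t : ℝ => t ^ p) 1 :=
      Real.continuousAt_rpow_const 1 p (Or.inr hp0.le)
    obtain ⟨r, hr, hball⟩ := Metric.continuousAt_iff.1 hcont γ hγ
    refine ⟨r/2, by positivity, ?_⟩
    have hmem : dist (1 + r/2 : ℝ) 1 < r := by
      rw [Real.dist_eq, abs_of_nonneg (by linarith : (0:ℝ) ≤ 1 + r/2 - 1)]
      linarith
    have := hball hmem
    rw [Real.dist_eq, Real.one_rpow, abs_lt] at this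
    linarith [this.2]
  -- the small error terms
  set e : ℕ → ℝ := fun j => hausdorffDist (F j) F₀ with he
  have he0 : ∀ j, 0 ≤ e j := fun j => hausdorffDist_nonneg
  set cc : ℕ → ℝ := fun j => (1 + 1/δ) ^ p * e j ^ p with hcc
  have hcc0 : ∀ j, 0 ≤ cc j := fun j => by
    apply mul_nonneg (Real.rpow_nonneg (by positivity) _) (Real.rpow_nonneg (he0 j) _)
  have hcctend : Tendsto cc atTop (𝓝 0) := by
    have h1 : Tendsto (fun j => e j ^ p) atTop (𝓝 ((0:ℝ) ^ p)) :=
      ((Real.continuousAt_rpow_const 0 p (Or.inr hp0.le)).tendsto).comp hd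
    rw [Real.zero_rpow hp0.ne'] at h1
    simpa [hcc] using h1.const_mul ((1 + 1/δ) ^ p)
  -- pointwise comparisons
  have hpt : ∀ j y, infDist y (F j) ^ p ≤ (1 + δ) ^ p * infDist y F₀ ^ p + cc j := by
    intro j y
    have h1 : infDist y (F j) ≤ infDist y F₀ + e j := by
      have := infDist_le_infDist_add_hausdorffDist (x := y) (s := F₀) (t := F j)
        (by rw [EMetric.hausdorffEdist_comm]; exact hedist j)
      rwa [hausdorffDist_comm] at this
    have h2 : infDist y (F j) ≤ max ((1 + δ) * infDist y F₀) ((1 + 1/δ) * e j) :=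
      h1.trans (add_le_max_delta hδpos)
    have h3 := rpow_le_add_of_le_max hp0 infDist_nonneg
      (mul_nonneg (by positivity) infDist_nonneg)
      (mul_nonneg (by positivity) (he0 j)) h2
    calc infDist y (F j) ^ p ≤ ((1+δ) * infDist y F₀) ^ p + ((1 + 1/δ) * e j) ^ p := h3
    _ = (1 + δ) ^ p * infDist y F₀ ^ p + cc j := by
        rw [Real.mul_rpow (by positivity) infDist_nonneg,
            Real.mul_rpow (by positivity) (he0 j)]
  have hpt' : ∀ j y, infDist y F₀ ^ p ≤ (1 + δ) ^ p * infDist y (F j) ^ p + cc j := by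
    intro j y
    have h1 : infDist y F₀ ≤ infDist y (F j) + e j :=
      infDist_le_infDist_add_hausdorffDist (x := y) (s := F j) (t := F₀) (hedist j)
    have h2 : infDist y F₀ ≤ max ((1 + δ) * infDist y (F j)) ((1 + 1/δ) * e j) :=
      h1.trans (add_le_max_delta hδpos)
    have h3 := rpow_le_add_of_le_max hp0 infDist_nonneg
      (mul_nonneg (by positivity) infDist_nonneg)
      (mul_nonneg (by positivity) (he0 j)) h2
    calc infDist y F₀ ^ p ≤ ((1+δ) * infDist y (F j)) ^ p + ((1 + 1/δ) * e j) ^ p := h3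
    _ = (1 + δ) ^ p * infDist y (F j) ^ p + cc j := by
        rw [Real.mul_rpow (by positivity) infDist_nonneg,
            Real.mul_rpow (by positivity) (he0 j)]
  -- integrated comparisons
  have iW : ∀ j, Integrable (fun y => infDist y (F j) ^ p) (μ (φ j)) :=
    fun j => integrable_infDist_rpow hp (hμ (φ j)) (hFne j)
  have iV : ∀ j, Integrable (fun y => infDist y F₀ ^ p) (μ (φ j)) :=
    fun j => integrable_infDist_rpow hp (hμ (φ j)) ⟨s₀, hs₀⟩
  have hExp : ∀ j, ∫ y, ((1+δ)^p * infDist y F₀ ^ p + cc j) ∂ μ (φ j)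
      = (1+δ)^p * (∫ y, infDist y F₀ ^ p ∂ μ (φ j)) + cc j := by
    intro j
    rw [integral_add ((iV j).const_mul ((1+δ)^p)) (integrable_const (cc j)),
      integral_const_mul, integral_const, probReal_univ]
    simp
  have hExpW : ∀ j, ∫ y, ((1+δ)^p * infDist y (F j) ^ p + cc j) ∂ μ (φ j)
      = (1+δ)^p * (∫ y, infDist y (F j) ^ p ∂ μ (φ j)) + cc j := by
    intro j
    rw [integral_add ((iW j).const_mul ((1+δ)^p)) (integrable_const (cc j)),
      integral_const_mul, integral_const, probReal_univ]
    simp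
  have ineq1 : ∀ j, Wp p (F j) (μ (φ j)) ≤
      (1 + δ) ^ p * (∫ y, infDist y F₀ ^ p ∂ μ (φ j)) + cc j := by
    intro j
    have hint : Integrable (fun y => (1+δ)^p * infDist y F₀ ^ p + cc j) (μ (φ j)) :=
      ((iV j).const_mul ((1+δ)^p)).add (integrable_const (cc j))
    have := integral_mono (μ := μ (φ j)) (iW j) hint (fun y => hpt j y)
    rw [hExp j] at this
    simpa [Wp] using this
  have ineq2 : ∀ j, (∫ y, infDist y F₀ ^ p ∂ μ (φ j)) ≤
      (1 + δ) ^ p * Wp p (F j) (μ (φ j)) + cc j := by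
    intro j
    have hint : Integrable (fun y => (1+δ)^p * infDist y (F j) ^ p + cc j) (μ (φ j)) :=
      ((iW j).const_mul ((1+δ)^p)).add (integrable_const (cc j))
    have := integral_mono (μ := μ (φ j)) (iV j) hint (fun y => hpt' j y)
    rw [hExpW j] at this
    simpa [Wp] using this
  have hW0 : ∀ j, 0 ≤ Wp p (F j) (μ (φ j)) :=
    fun j => integral_nonneg fun y => Real.rpow_nonneg infDist_nonneg _
  have hV0 : ∀ j, 0 ≤ ∫ y, infDist y F₀ ^ p ∂ μ (φ j) :=
    fun j => integral_nonneg fun y => Real.rpow_nonneg infDist_nonneg _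
  have eV : ∀ᶠ j in atTop, dist (∫ y, infDist y F₀ ^ p ∂ μ (φ j)) L < ε/4 := by
    obtain ⟨N, hN⟩ := Metric.tendsto_atTop.1 hV (ε/4) (by positivity)
    exact eventually_atTop.2 ⟨N, hN⟩
  have ecc : ∀ᶠ j in atTop, cc j < ε/4 := by
    obtain ⟨N, hN⟩ := Metric.tendsto_atTop.1 hcctend (ε/4) (by positivity)
    exact eventually_atTop.2 ⟨N, fun j hj => by
      have := hN j hj; rwa [Real.dist_0_eq_abs, abs_of_nonneg (hcc0 j)] at this⟩
  rw [← eventually_atTop]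
  filter_upwards [eV, ecc] with j hVj hccj
  rw [Real.dist_eq, abs_lt] at hVj ⊢
  set V := ∫ y, infDist y F₀ ^ p ∂ μ (φ j)
  set W := Wp p (F j) (μ (φ j))
  have k1 : (1 + δ) ^ p * V ≤ (1 + γ) * V := mul_le_mul_of_nonneg_right hδ (hV0 j)
  have k2 : γ * V ≤ γ * (L + ε/4) := mul_le_mul_of_nonneg_left (by linarith [hVj.2]) hγ.le
  have k3 : γ * (L + ε/4) ≤ γ * (L + 1 + ε) := mul_le_mul_of_nonneg_left (by linarith) hγ.le
  have k4 : γ * (L + 1 + ε) = ε/4 := by linarith [hγeq]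
  have hWu : W ≤ L + 3*(ε/4) := by nlinarith [ineq1 j, k1, k2, k3, k4, hVj.2, hccj]
  have k5 : (1 + δ) ^ p * W ≤ (1 + γ) * W := mul_le_mul_of_nonneg_right hδ (hW0 j)
  have k6 : γ * W ≤ γ * (L + 3*(ε/4)) := mul_le_mul_of_nonneg_left hWu hγ.le
  have k7 : γ * (L + 3*(ε/4)) ≤ γ * (L + 1 + ε) := mul_le_mul_of_nonneg_left (by linarith) hγ.le
  have hWl : L - ε < W := by nlinarith [ineq2 j, k5, k6, k7, k4, hVj.1, hccj]
  have hLW : Wp p F₀ ν = L := rfl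
  rw [hLW]
  exact ⟨by linarith, by linarith⟩


omit [MeasurableSpace X] [OpensMeasurableSpace X] in
lemma exists_sep {t : Set X} (ht : t.Finite) :
    ∃ δ > 0, ∀ a ∈ t, ∀ b ∈ t, a ≠ b → δ ≤ dist a b := by
  classical
  set P := (ht.toFinset ×ˢ ht.toFinset).filter (fun q : X × X => q.1 ≠ q.2) with hP
  by_cases hPne : P.Nonempty
  · refine ⟨P.inf' hPne (fun q => dist q.1 q.2), ?_, ?_⟩
    · rw [gt_iff_lt, Finset.lt_inf'_iff]
      intro q hq
      rw [hP, Finset.mem_filter] at hq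
      exact dist_pos.2 hq.2
    · intro a ha b hb hab
      have hmem : (a, b) ∈ P := by
        rw [hP, Finset.mem_filter, Finset.mem_product]
        exact ⟨⟨ht.mem_toFinset.2 ha, ht.mem_toFinset.2 hb⟩, hab⟩
      exact Finset.inf'_le (fun q : X × X => dist q.1 q.2) hmem
  · refine ⟨1, one_pos, fun a ha b hb hab => absurd ?_ hPne⟩
    exact ⟨(a, b), by
      rw [hP, Finset.mem_filter, Finset.mem_product]
      exact ⟨⟨ht.mem_toFinset.2 ha, ht.mem_toFinset.2 hb⟩, hab⟩⟩


end StmtAux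


/-- Kuratowski-upper "continuity" of the clustering map: under Wasserstein convergence of
the measures, eventual equality of the numbers of clusters, and Kuratowski convergence of
the domains, `Ls_n C_p(μ_n,k_n,R_n) ⊆ C_p(μ,k,R)` in the hyperspace `K(X)`. -/
theorem stmt9 {X : Type*} [MetricSpace X] [MeasurableSpace X] [BorelSpace X]
    (p : ℝ) (hp : 1 ≤ p) (μ : ℕ → Measure X) (ν : Measure X)
    [∀ n, IsProbabilityMeasure (μ n)] [IsProbabilityMeasure ν]
    (hμ : ∀ n, FinMom p (μ n)) (hν : FinMom p ν) (hconv : WassTendsto p μ ν)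
    (k : ℕ → ℕ) (k₀ : ℕ) (hk : ∀ᶠ n in atTop, k n = k₀)
    (R : ℕ → Set X) (R₀ : Set X) (hRc : ∀ n, IsClosed (R n)) (hR₀ : IsClosed R₀)
    (hLi : KurLi R = R₀) (hLs : KurLs R = R₀) :
    KurLs (fun n => Cp p (μ n) (k n) (R n)) ⊆ Cp p ν k₀ R₀ := by
  intro A hA
  classical
  -- extract a subsequence of optimal sets converging to A
  have hfreq : ∀ j : ℕ, ∃ᶠ n in atTop, (k n = k₀ ∧
      ∃ S : NonemptyCompacts X, S ∈ Cp p (μ n) (k n) (R n) ∧ dist S A < 1/((j:ℝ)+1)) := by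
    intro j
    have h1 := hA (Metric.ball A (1/((j:ℝ)+1))) (Metric.ball_mem_nhds A (by positivity))
    refine (h1.and_eventually hk).mono ?_
    rintro n ⟨⟨S, hSb, hSc⟩, hkn⟩
    exact ⟨hkn, S, hSc, by rwa [Metric.mem_ball] at hSb⟩
  obtain ⟨φ, hφmono, hφ⟩ := Filter.extraction_forall_of_frequently hfreq
  choose hk' S hS1 hS2 using hφ
  have hSfeas : ∀ j, Feas (k (φ j)) (R (φ j)) (S j : Set X) := fun j => (hS1 j).1
  have hSopt : ∀ j, ∀ T : Set X, Feas (k (φ j)) (R (φ j)) T →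
      Wp p (S j : Set X) (μ (φ j)) ≤ Wp p T (μ (φ j)) := fun j => (hS1 j).2
  have hdist : ∀ j, hausdorffDist (S j : Set X) (A : Set X) < 1/((j:ℝ)+1) := fun j => by
    have := hS2 j; rwa [NonemptyCompacts.dist_eq] at this
  have hdnn : Tendsto (fun j => hausdorffDist (S j : Set X) (A : Set X)) atTop (𝓝 0) := by
    apply squeeze_zero (fun j => hausdorffDist_nonneg) (fun j => (hdist j).le)
    exact tendsto_one_div_add_atTop_nhds_zero_nat
  have hedist : ∀ j, EMetric.hausdorffEdist (S j : Set X) (A : Set X) ≠ ⊤ := fun j =>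
    hausdorffEdist_ne_top_of_nonempty_of_bounded (S j).nonempty A.nonempty
      (S j).isCompact.isBounded A.isCompact.isBounded
  -- A ⊆ R₀
  have hsub : (A : Set X) ⊆ R₀ := by
    intro a ha
    rw [← hLs]
    intro U hU
    rw [Metric.mem_nhds_iff] at hU
    obtain ⟨r, hr, hball⟩ := hU
    rw [Filter.frequently_atTop]
    intro N
    obtain ⟨j, hjr, hjN⟩ :=
      ((tendsto_one_div_add_atTop_nhds_zero_nat.eventually (gt_mem_nhds hr)).and
        (eventually_ge_atTop N)).exists
    refine ⟨φ j, le_trans hjN hφmono.le_apply, ?_⟩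
    have h2 : hausdorffDist (A : Set X) (S j : Set X) < r := by
      rw [hausdorffDist_comm]; exact (hdist j).trans hjr
    obtain ⟨b, hb1, hb2⟩ := exists_dist_lt_of_hausdorffDist_lt ha h2
      (by rw [EMetric.hausdorffEdist_comm]; exact hedist j)
    exact ⟨b, hball (by rw [Metric.mem_ball, dist_comm]; exact hb2), (hSfeas j).1 hb1⟩
  -- cardinality bound
  have hcard : ∀ t ⊆ (A : Set X), t.Finite → t.ncard ≤ k₀ := by
    intro t hts htfin
    by_contra hlt
    push_neg at hlt
    obtain ⟨δ, hδ, hsep⟩ := StmtAux.exists_sep htfin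
    obtain ⟨j, hjr⟩ : ∃ j : ℕ, 1/((j:ℝ)+1) < δ/2 :=
      (tendsto_one_div_add_atTop_nhds_zero_nat.eventually (gt_mem_nhds (by positivity))).exists
    have hH : hausdorffDist (A : Set X) (S j : Set X) < δ/2 := by
      rw [hausdorffDist_comm]; exact (hdist j).trans hjr
    have hch : ∀ a : X, ∃ s, a ∈ t → (s ∈ (S j : Set X) ∧ dist a s < δ/2) := by
      intro a
      by_cases ha : a ∈ t
      · obtain ⟨s, hs1, hs2⟩ := exists_dist_lt_of_hausdorffDist_lt (hts ha) hH
          (by rw [EMetric.hausdorffEdist_comm]; exact hedist j)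
        exact ⟨s, fun _ => ⟨hs1, hs2⟩⟩
      · exact ⟨a, fun h => absurd h ha⟩
    choose f hf using hch
    have hinj : Set.InjOn f t := by
      intro a ha b hb hfeq
      by_contra hne
      have h1 := hf a ha
      have h2 := hf b hb
      have hlt2 : dist a b < δ := by
        calc dist a b ≤ dist a (f a) + dist (f a) b := dist_triangle _ _ _
        _ = dist a (f a) + dist b (f b) := by rw [hfeq, dist_comm (f b) b]
        _ < δ/2 + δ/2 := add_lt_add h1.2 h2.2
        _ = δ := by ring
      exact absurd (hsep a ha b hb hne) (not_le.2 hlt2)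
    have hfin : (S j : Set X).Finite := (hSfeas j).2.1
    have hmono := Set.ncard_le_ncard_of_injOn f (fun a ha => (hf a ha).1) hinj hfin
    have hle := (hSfeas j).2.2.2
    rw [hk' j] at hle
    omega
  have hAfin : (A : Set X).Finite := by
    by_contra hinf
    obtain ⟨t, hts, htfin, htcard⟩ :=
      Set.Infinite.exists_subset_ncard_eq hinf (k₀+1)
    have := hcard t hts htfin
    omega
  have hAfeas : Feas k₀ R₀ (A : Set X) := ⟨hsub, hAfin, A.nonempty, hcard _ subset_rfl hAfin⟩
  refine ⟨hAfeas, ?_⟩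
  intro T hT
  obtain ⟨hTsub, hTfin, hTne, hTcard⟩ := hT
  -- approximate T inside R n
  have hLi' : ∀ t ∈ T, ∀ ε > 0, ∀ᶠ n in atTop, ∃ x ∈ R n, dist t x < ε := by
    intro t ht ε hε
    have h1 : t ∈ KurLi R := by rw [hLi]; exact hTsub ht
    refine (h1 (Metric.ball t ε) (Metric.ball_mem_nhds t hε)).mono ?_
    rintro n ⟨x, hx1, hx2⟩
    exact ⟨x, hx2, by rw [Metric.mem_ball, dist_comm] at hx1; exact hx1⟩
  obtain ⟨t₀, ht₀⟩ := hTne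
  have hRne : ∀ᶠ n in atTop, (R n).Nonempty :=
    (hLi' t₀ ht₀ 1 one_pos).mono (fun n hn => hn.imp (fun x hx => hx.1))
  have hinfd : ∀ t ∈ T, Tendsto (fun n => infDist t (R n)) atTop (𝓝 0) := by
    intro t ht
    rw [Metric.tendsto_nhds]
    intro ε hε
    filter_upwards [hLi' t ht ε hε] with n hn
    obtain ⟨x, hx1, hx2⟩ := hn
    rw [Real.dist_0_eq_abs, abs_of_nonneg infDist_nonneg]
    exact lt_of_le_of_lt (infDist_le_dist_of_mem hx1) hx2
  have hch2 : ∀ n, ∀ t : X, ∃ x,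
      ((R n).Nonempty → t ∈ T → (x ∈ R n ∧ dist t x ≤ infDist t (R n) + 1/((n:ℝ)+1))) := by
    intro n t
    by_cases h : (R n).Nonempty ∧ t ∈ T
    · obtain ⟨x, hx1, hx2⟩ := (Metric.infDist_lt_iff h.1).1
        (lt_add_of_pos_right _ (by positivity : (0:ℝ) < 1/((n:ℝ)+1)))
      exact ⟨x, fun _ _ => ⟨hx1, hx2.le⟩⟩
    · exact ⟨t, fun h1 h2 => absurd ⟨h1, h2⟩ h⟩
  choose r hr using hch2
  set G : ℕ → Set X := fun n => (fun t => r n t) '' T with hG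
  have hGfin : ∀ n, (G n).Finite := fun n => hTfin.image _
  have hGne : ∀ n, (G n).Nonempty := fun n => Set.Nonempty.image _ ⟨t₀, ht₀⟩
  have hGcard : ∀ n, (G n).ncard ≤ k₀ := fun n =>
    le_trans (Set.ncard_image_le hTfin) hTcard
  have hGsub : ∀ᶠ n in atTop, G n ⊆ R n := hRne.mono (fun n hn => by
    rintro x ⟨t, ht, rfl⟩; exact (hr n t hn ht).1)
  have hGd : Tendsto (fun n => hausdorffDist (G n) T) atTop (𝓝 0) := by
    rw [Metric.tendsto_nhds]
    intro ε hε
    have hAe : ∀ᶠ n in atTop, ∀ t ∈ T, dist t (r n t) < ε/2 := by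
      rw [eventually_all_finite hTfin]
      intro t ht
      have h2 : Tendsto (fun n : ℕ => infDist t (R n) + 1/((n:ℝ)+1)) atTop (𝓝 0) := by
        have := (hinfd t ht).add tendsto_one_div_add_atTop_nhds_zero_nat
        simpa using this
      have h3 : ∀ᶠ n in atTop, infDist t (R n) + 1/((n:ℝ)+1) < ε/2 :=
        h2.eventually (gt_mem_nhds (by positivity))
      filter_upwards [h3, hRne] with n hn hne
      exact lt_of_le_of_lt ((hr n t hne ht).2) hn
    filter_upwards [hAe] with n hn
    rw [Real.dist_0_eq_abs, abs_of_nonneg hausdorffDist_nonneg]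
    have hle2 : hausdorffDist (G n) T ≤ ε/2 := by
      apply hausdorffDist_le_of_mem_dist (by positivity)
      · rintro x ⟨t, ht, rfl⟩
        exact ⟨t, ht, by rw [dist_comm]; exact (hn t ht).le⟩
      · intro t ht
        exact ⟨r n t, ⟨t, ht, rfl⟩, (hn t ht).le⟩
    linarith
  have hGdφ : Tendsto (fun j => hausdorffDist (G (φ j)) T) atTop (𝓝 0) :=
    hGd.comp hφmono.tendsto_atTop
  have hW1 : Tendsto (fun j => Wp p ((S j : Set X)) (μ (φ j))) atTop
      (𝓝 (Wp p (A : Set X) ν)) :=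
    StmtAux.wp_tendsto hp hμ hν hconv hφmono (F := fun j => (S j : Set X))
      (F₀ := (A : Set X)) (fun j => (hSfeas j).2.1) (fun j => (S j).nonempty)
      hAfin A.nonempty hdnn
  have hW2 : Tendsto (fun j => Wp p (G (φ j)) (μ (φ j))) atTop (𝓝 (Wp p T ν)) :=
    StmtAux.wp_tendsto hp hμ hν hconv hφmono (F := fun j => G (φ j)) (F₀ := T)
      (fun j => hGfin _) (fun j => hGne _) hTfin ⟨t₀, ht₀⟩ hGdφ
  have hle : ∀ᶠ j in atTop, Wp p ((S j : Set X)) (μ (φ j)) ≤ Wp p (G (φ j)) (μ (φ j)) := by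
    filter_upwards [hφmono.tendsto_atTop.eventually hGsub] with j hj
    exact hSopt j _ ⟨hj, hGfin _, hGne _, by rw [hk' j]; exact hGcard _⟩
  exact le_of_tendsto_of_tendsto hW1 hW2 hle
end
end

section
/- Let (X,d) be a Heine–Borel metric space, p ≥ 1, μ ∈ P_p(X), k ∈ ℕ, and R ⊆ X a nonempty closed set. Then the set C_p(μ,k,R) of optimal cluster center sets is nonempty; i.e., there exists a set S ⊆ R with 1 ≤ #S ≤ k achieving inf{∫ min_{x∈S'} d(x,y)^p dμ(y) : S' ⊆ R, 1 ≤ #S' ≤ k}. -/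
open Filter MeasureTheory Topology TopologicalSpace Metric Set

noncomputable section

variable {X : Type*} [MetricSpace X] [MeasurableSpace X]

open scoped ENNReal

/-!
Take a minimizing sequence of feasible center sets, each written as a `k`-tuple. By Heine–Borel a
subsequence can be chosen along which every coordinate either converges or leaves every compact
set. The candidate optimum is the set of limits of the converging coordinates: distances to the
`n`-th center set converge pointwise to the distance to it, so Fatou's lemma bounds its cost by the
optimal cost. Costs are measured in `ℝ≥0∞`, where the empty set has infinite cost, so if all
coordinates escaped the bound would be violated; hence the limit set is nonempty, and it lies in
`R` because `R` is closed.
-/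

theorem exists_strictMono_forall_of_exists_subseq {β ι : Type*} [Finite ι] {P : (ℕ → β) → Prop}
    (hP : ∀ u : ℕ → β, ∃ φ : ℕ → ℕ, StrictMono φ ∧ P (u ∘ φ))
    (hP_comp : ∀ (u : ℕ → β) (φ : ℕ → ℕ), StrictMono φ → P u → P (u ∘ φ)) (g : ℕ → ι → β) :
    ∃ φ : ℕ → ℕ, StrictMono φ ∧ ∀ i, P fun n => g (φ n) i := by
  classical
  cases nonempty_fintype ι
  suffices ∀ s : Finset ι, ∃ φ : ℕ → ℕ, StrictMono φ ∧ ∀ i ∈ s, P fun n => g (φ n) i by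
    simpa using this Finset.univ
  intro s
  induction s using Finset.induction with
  | empty => exact ⟨id, strictMono_id, by simp⟩
  | insert a s _ ih =>
    obtain ⟨φ, hφ, hPφ⟩ := ih
    obtain ⟨ψ, hψ, hPψ⟩ := hP fun n => g (φ n) a
    refine ⟨φ ∘ ψ, hφ.comp hψ, (Finset.forall_mem_insert _ _ _).2 ⟨hPψ, fun i hi => ?_⟩⟩
    exact hP_comp _ ψ hψ (hPφ i hi)

section Escape

variable {α : Type*} [TopologicalSpace α]

def ConvergesOrEscapes (u : ℕ → α) : Prop :=
  (∃ x, Tendsto u atTop (𝓝 x)) ∨ Tendsto u atTop (cocompact α)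

theorem ConvergesOrEscapes.comp {u : ℕ → α} (hu : ConvergesOrEscapes u) {φ : ℕ → ℕ}
    (hφ : StrictMono φ) : ConvergesOrEscapes (u ∘ φ) :=
  hu.imp (fun ⟨x, hx⟩ => ⟨x, hx.comp hφ.tendsto_atTop⟩) (·.comp hφ.tendsto_atTop)

theorem exists_subseq_convergesOrEscapes [FirstCountableTopology α] (u : ℕ → α) :
    ∃ φ : ℕ → ℕ, StrictMono φ ∧ ConvergesOrEscapes (u ∘ φ) := by
  by_cases h : Tendsto u atTop (cocompact α)
  · exact ⟨id, strictMono_id, Or.inr h⟩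
  obtain ⟨s, hs, hfreq⟩ := not_tendsto_iff_exists_frequently_notMem.1 h
  obtain ⟨K, hK, hKs⟩ := mem_cocompact.1 hs
  obtain ⟨ψ, hψ, huK⟩ := extraction_of_frequently_atTop
    (hfreq.mono fun n hn => by_contra fun hnK => hn (hKs hnK))
  obtain ⟨x, -, χ, hχ, hlim⟩ := hK.tendsto_subseq huK
  exact ⟨ψ ∘ χ, hψ.comp hχ, Or.inl ⟨x, hlim⟩⟩

end Escape

section Proper

variable {α : Type*} [MetricSpace α] [ProperSpace α]

theorem ConvergesOrEscapes.tendsto_edist {u : ℕ → α} (hu : ConvergesOrEscapes u) (y : α) :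
    Tendsto (fun n => edist y (u n)) atTop (𝓝 (infEDist y {x | Tendsto u atTop (𝓝 x)})) := by
  rcases hu with ⟨x, hx⟩ | hu
  · have : {x | Tendsto u atTop (𝓝 x)} = {x} :=
      Set.eq_singleton_iff_unique_mem.2 ⟨hx, fun x' hx' => tendsto_nhds_unique hx' hx⟩
    rw [this, infEDist_singleton]
    exact tendsto_const_nhds.edist hx
  · have hdist : Tendsto (fun n => dist y (u n)) atTop atTop :=
      (tendsto_dist_left_cocompact_atTop y).comp hu
    have : {x | Tendsto u atTop (𝓝 x)} = ∅ :=
      Set.eq_empty_of_forall_notMem fun x hx =>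
        not_tendsto_atTop_of_tendsto_nhds (tendsto_const_nhds.dist hx) hdist
    rw [this, infEDist_empty]
    simp only [edist_dist]
    exact ENNReal.tendsto_ofReal_atTop.comp hdist

theorem tendsto_infEDist_range {ι : Type*} [Finite ι] {g : ℕ → ι → α}
    (hg : ∀ i, ConvergesOrEscapes fun n => g n i) (y : α) :
    Tendsto (fun n => infEDist y (range (g n))) atTop
      (𝓝 (infEDist y (⋃ i, {x | Tendsto (fun n => g n i) atTop (𝓝 x)}))) := by
  cases nonempty_fintype ι
  simp only [← iUnion_singleton_eq_range, infEDist_iUnion, infEDist_singleton,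
    ← Finset.inf_univ_eq_iInf]
  exact Tendsto.finset_inf_nhds_apply fun i _ => (hg i).tendsto_edist y

end Proper

theorem Feas.exists_range_eq {α : Type*} {k : ℕ} {R S : Set α} (h : Feas k R S) :
    ∃ f : Fin k → α, range f = S := by
  have := h.2.1.to_subtype
  obtain ⟨f, hf⟩ := Function.exists_surjective_iff.2
    ⟨h.2.2.1.to_subtype.map fun s _ => s,
      ⟨(Finite.equivFin S).toEmbedding.trans (Fin.castLEEmb h.2.2.2)⟩⟩
  exact ⟨(↑) ∘ f, by rw [range_comp, hf.range_eq, image_univ, Subtype.range_coe]⟩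

def eWp (p : ℝ) (S : Set X) (μ : Measure X) : ℝ≥0∞ :=
  ∫⁻ y, infEDist y S ^ p ∂μ

section Cost

variable {p : ℝ} {S : Set X} {μ : Measure X}

theorem eWp_empty (hp : 0 < p) [NeZero μ] : eWp p ∅ μ = ∞ := by
  simp [eWp, infEDist_empty, ENNReal.top_rpow_of_pos hp, NeZero.ne μ]

theorem Wp_eq_toReal_eWp [OpensMeasurableSpace X] (hp : 0 ≤ p) (hS : S.Nonempty) :
    Wp p S μ = (eWp p S μ).toReal := by
  have hcont : Continuous fun y => infDist y S ^ p :=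
    (continuous_infDist_pt S).rpow_const fun _ => Or.inr hp
  rw [Wp, integral_eq_lintegral_of_nonneg_ae
    (Eventually.of_forall fun y => Real.rpow_nonneg infDist_nonneg p) hcont.aestronglyMeasurable]
  congr 1
  refine lintegral_congr fun y => ?_
  rw [← ENNReal.ofReal_rpow_of_nonneg infDist_nonneg hp, infDist,
    ENNReal.ofReal_toReal (infEDist_ne_top hS)]

theorem eWp_lt_top (hp : 1 ≤ p) [IsFiniteMeasure μ] (hμ : FinMom p μ) (hS : S.Nonempty) :
    eWp p S μ < ∞ := by
  obtain ⟨x, hx⟩ := hμ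
  obtain ⟨s, hs⟩ := hS
  have hmom : ∫⁻ y, edist x y ^ p ∂μ < ∞ := by
    simpa only [edist_dist, ENNReal.ofReal_rpow_of_nonneg dist_nonneg (zero_le_one.trans hp)]
      using hx.lintegral_lt_top
  have hpt : ∀ y, infEDist y S ^ p ≤ 2 ^ (p - 1) * (edist x y ^ p + edist x s ^ p) := fun y =>
    calc infEDist y S ^ p ≤ (edist x y + edist x s) ^ p := by
          gcongr
          exact (infEDist_le_edist_of_mem hs).trans
            ((edist_triangle y x s).trans_eq (by rw [edist_comm]))
      _ ≤ 2 ^ (p - 1) * (edist x y ^ p + edist x s ^ p) :=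
          ENNReal.rpow_add_le_mul_rpow_add_rpow _ _ hp
  have h2 : (2 : ℝ≥0∞) ^ (p - 1) ≠ ∞ :=
    ENNReal.rpow_ne_top_of_nonneg (sub_nonneg.2 hp) ENNReal.ofNat_ne_top
  calc eWp p S μ ≤ ∫⁻ y, 2 ^ (p - 1) * (edist x y ^ p + edist x s ^ p) ∂μ := lintegral_mono hpt
    _ = 2 ^ (p - 1) * (∫⁻ y, edist x y ^ p ∂μ + edist x s ^ p * μ univ) := by
      rw [lintegral_const_mul' _ _ h2, lintegral_add_right _ measurable_const,
        lintegral_const]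
    _ < ∞ := by
      refine ENNReal.mul_lt_top h2.lt_top (ENNReal.add_lt_top.2 ⟨hmom, ?_⟩)
      exact ENNReal.mul_lt_top (ENNReal.rpow_lt_top_of_nonneg (zero_le_one.trans hp)
        (edist_ne_top x s)) (measure_lt_top μ univ)

theorem ofReal_Wp [OpensMeasurableSpace X] (hp : 1 ≤ p) [IsFiniteMeasure μ] (hμ : FinMom p μ)
    (hS : S.Nonempty) :
    ENNReal.ofReal (Wp p S μ) = eWp p S μ := by
  rw [Wp_eq_toReal_eWp (zero_le_one.trans hp) hS, ENNReal.ofReal_toReal (eWp_lt_top hp hμ hS).ne]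

theorem eWp_le_liminf [OpensMeasurableSpace X] {T : ℕ → Set X}
    (hT : ∀ y, Tendsto (fun n => infEDist y (T n)) atTop (𝓝 (infEDist y S))) :
    eWp p S μ ≤ liminf (fun n => eWp p (T n) μ) atTop :=
  calc eWp p S μ = ∫⁻ y, liminf (fun n => infEDist y (T n) ^ p) atTop ∂μ :=
        lintegral_congr fun y =>
          ((ENNReal.continuous_rpow_const.tendsto _).comp (hT y)).liminf_eq.symm
    _ ≤ liminf (fun n => eWp p (T n) μ) atTop :=
        lintegral_liminf_le fun _ => continuous_infEDist.measurable.pow_const p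

end Cost

theorem exists_subset_eWp_le_of_tendsto [ProperSpace X] [OpensMeasurableSpace X] {p : ℝ}
    {μ : Measure X} {k : ℕ} {R : Set X} (hR : IsClosed R) {T : ℕ → Set X} (hT : ∀ n, Feas k R (T n))
    {L : ℝ≥0∞} (hL : Tendsto (fun n => eWp p (T n) μ) atTop (𝓝 L)) :
    ∃ S ⊆ R, S.Finite ∧ S.ncard ≤ k ∧ eWp p S μ ≤ L := by
  choose g hg using fun n => (hT n).exists_range_eq
  obtain ⟨φ, hφ, hconv⟩ := exists_strictMono_forall_of_exists_subseq
    exists_subseq_convergesOrEscapes (fun _ _ hφ hu => hu.comp hφ) g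
  have : Nonempty X := (hT 0).2.2.1.to_subtype.map (↑)
  set S := ⋃ i, {x | Tendsto (fun n => g (φ n) i) atTop (𝓝 x)}
  have hS : S ⊆ range fun i => limUnder atTop fun n => g (φ n) i :=
    iUnion_subset fun i x hx => ⟨i, hx.limUnder_eq⟩
  refine ⟨S, iUnion_subset fun i x hx => ?_, (finite_range _).subset hS, ?_, ?_⟩
  · exact hR.mem_of_tendsto hx
      (Eventually.of_forall fun n => (hT (φ n)).1 (hg (φ n) ▸ mem_range_self i))
  · calc S.ncard ≤ (range fun i => limUnder atTop fun n => g (φ n) i).ncard :=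
          ncard_le_ncard hS (finite_range _)
      _ ≤ k := by simpa using Finite.card_range_le (fun i => limUnder atTop fun n => g (φ n) i)
  · calc eWp p S μ ≤ liminf (fun n => eWp p (T (φ n)) μ) atTop :=
          eWp_le_liminf fun y => by simpa only [hg] using tendsto_infEDist_range hconv y
      _ = L := (hL.comp hφ.tendsto_atTop).liminf_eq

section OptimalCost

variable {p : ℝ} {μ : Measure X} {k : ℕ} {R : Set X}

theorem Wp_nonneg (S : Set X) : 0 ≤ Wp p S μ :=
  integral_nonneg fun _ => Real.rpow_nonneg infDist_nonneg p

theorem mCost_nonneg : 0 ≤ mCost p μ k R :=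
  Real.sInf_nonneg (by rintro _ ⟨S, -, rfl⟩; exact Wp_nonneg S)

theorem bddBelow_Wp_feas : BddBelow ((fun S => Wp p S μ) '' {S | Feas k R S}) :=
  ⟨0, by rintro _ ⟨S, -, rfl⟩; exact Wp_nonneg S⟩

theorem mCost_le {T : Set X} (hT : Feas k R T) : mCost p μ k R ≤ Wp p T μ :=
  csInf_le bddBelow_Wp_feas ⟨T, hT, rfl⟩

theorem exists_seq_feas_tendsto_mCost (hk : 1 ≤ k) (hR : R.Nonempty) :
    ∃ T : ℕ → Set X, (∀ n, Feas k R (T n)) ∧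
      Tendsto (fun n => Wp p (T n) μ) atTop (𝓝 (mCost p μ k R)) := by
  obtain ⟨x, hx⟩ := hR
  have hsingleton : Feas k R {x} := ⟨singleton_subset_iff.2 hx, finite_singleton x,
    singleton_nonempty x, by rwa [ncard_singleton]⟩
  obtain ⟨u, -, hu, hmem⟩ :=
    exists_seq_tendsto_sInf (S := (fun S => Wp p S μ) '' {S | Feas k R S})
      ⟨_, mem_image_of_mem _ hsingleton⟩ bddBelow_Wp_feas
  choose T hT hTu using hmem
  exact ⟨T, hT, hu.congr fun n => (hTu n).symm⟩

end OptimalCost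

/-- In a Heine–Borel (proper) space, for `μ ∈ P_p(X)`, `k ≥ 1` and `R` nonempty closed,
the set of optimal cluster-center sets `C_p(μ,k,R)` is nonempty. -/
theorem stmt10 {X : Type*} [MetricSpace X] [ProperSpace X] [MeasurableSpace X] [BorelSpace X]
    (p : ℝ) (hp : 1 ≤ p) (μ : Measure X) [IsProbabilityMeasure μ] (hμ : FinMom p μ)
    (k : ℕ) (hk : 1 ≤ k) (R : Set X) (hRc : IsClosed R) (hRne : R.Nonempty) :
    (Cp p μ k R).Nonempty := by
  obtain ⟨T, hT, hTm⟩ := exists_seq_feas_tendsto_mCost (p := p) (μ := μ) hk hRne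
  have hTe : Tendsto (fun n => eWp p (T n) μ) atTop (𝓝 (ENNReal.ofReal (mCost p μ k R))) :=
    (ENNReal.tendsto_ofReal hTm).congr fun n => ofReal_Wp hp hμ (hT n).2.2.1
  obtain ⟨S, hSR, hSfin, hSk, hSm⟩ := exists_subset_eWp_le_of_tendsto hRc hT hTe
  have hSne : S.Nonempty := by
    rw [nonempty_iff_ne_empty]
    rintro rfl
    rw [eWp_empty (zero_lt_one.trans_le hp), top_le_iff] at hSm
    exact ENNReal.ofReal_ne_top hSm
  refine ⟨⟨⟨S, hSfin.isCompact⟩, hSne⟩, ⟨hSR, hSfin, hSne, hSk⟩, fun T' hT' => ?_⟩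
  calc Wp p S μ = (eWp p S μ).toReal := Wp_eq_toReal_eWp (zero_le_one.trans hp) hSne
    _ ≤ mCost p μ k R := ENNReal.toReal_le_of_le_ofReal mCost_nonneg hSm
    _ ≤ Wp p T' μ := mCost_le hT'
end
end

section
/- Let (X,d) be a metric space, p ≥ 1, and μ a Borel probability measure on X such that ∫_X exp(α d(x,y)^p) dμ(y) < ∞ for some x ∈ X and some α > 0. If {μ_n} are Borel probability measures with relative entropy H(μ_n | μ) → 0, then μ_n → μ in the p-Wasserstein topology (i.e., μ_n → μ weakly and ∫ d(x,y)^p dμ_n(y) → ∫ d(x,y)^p dμ(y)). -/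
open Filter MeasureTheory Topology TopologicalSpace Metric Set

noncomputable section

variable {X : Type*} [MetricSpace X] [MeasurableSpace X]

/-- The relative entropy (KL divergence) `H(ν|μ) = ∫ (dν/dμ) log(dν/dμ) dμ` if `ν ≪ μ`
(and the integrand is integrable, otherwise the entropy is `+∞`), valued in `EReal`. -/
def relEntropy {Y : Type*} [MeasurableSpace Y] (ν μ : Measure Y) : EReal :=
  haveI := Classical.propDecidable
    (ν ≪ μ ∧ Integrable
      (fun y => (ν.rnDeriv μ y).toReal * Real.log (ν.rnDeriv μ y).toReal) μ)
  if ν ≪ μ ∧ Integrable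
      (fun y => (ν.rnDeriv μ y).toReal * Real.log (ν.rnDeriv μ y).toReal) μ then
    ((∫ y, (ν.rnDeriv μ y).toReal * Real.log (ν.rnDeriv μ y).toReal ∂μ : ℝ) : EReal)
  else ⊤

/-!
Write `F = dν/dμ`. Integrating the pointwise inequality `|v - 1| ≤ ε (v + 1) + klFun v / (2ε)`,
where `klFun v = v log v + 1 - v`, gives the Pinsker-type bound `‖F - 1‖_{L¹(μ)} ≤ 2 √H(ν | μ)`,
hence weak convergence. For the moments, Young's inequality `u v ≤ (eᵘ - 1) + klFun v` gives the
entropy inequality `α ∫ φ dν ≤ ∫ (e^{αφ} - 1) dμ + H(ν | μ)` for `φ ≥ 0`. Applied to the tails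
`φ = (d(x, ·)ᵖ - M)⁺` it makes the `p`-th moments of the `ν_n` uniformly integrable, while the
truncations `min (d(x, ·)ᵖ) M` are bounded and handled by the `L¹` bound.
-/

open Real InformationTheory
open scoped ENNReal

namespace InformationTheory

lemma mul_le_exp_sub_one_add_klFun (u : ℝ) {v : ℝ} (hv : 0 ≤ v) :
    u * v ≤ (exp u - 1) + klFun v := by
  rw [klFun_apply]
  rcases hv.eq_or_lt with rfl | hv
  · simp [(exp_pos u).le]
  · have h := mul_le_mul_of_nonneg_left (add_one_le_exp (u - log v)) hv.le
    rw [exp_sub, exp_log hv, mul_div_cancel₀ _ hv.ne'] at h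
    linarith

lemma sq_sqrt_sub_one_le_klFun {v : ℝ} (hv : 0 ≤ v) : (√v - 1) ^ 2 ≤ klFun v := by
  rcases hv.eq_or_lt with rfl | hv
  · simp [klFun_zero]
  set w := √v
  have hw : 0 < w := sqrt_pos.2 hv
  have hwv : v = w ^ 2 := (sq_sqrt hv.le).symm
  have hlog : w - 1 ≤ w * log w := by
    have := mul_le_mul_of_nonneg_left (one_sub_inv_le_log_of_pos hw) hw.le
    rwa [mul_sub, mul_one, mul_inv_cancel₀ hw.ne'] at this
  rw [klFun_apply, hwv, log_pow]
  push_cast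
  nlinarith

lemma abs_sub_one_le_klFun {v ε : ℝ} (hv : 0 ≤ v) (hε : 0 < ε) :
    |v - 1| ≤ ε * (v + 1) + klFun v / (2 * ε) := by
  set w := √v
  have hw : 0 ≤ w := sqrt_nonneg v
  have hwv : v = w ^ 2 := (sq_sqrt hv).symm
  have hkl : (w - 1) ^ 2 ≤ klFun v := sq_sqrt_sub_one_le_klFun hv
  have habs : |v - 1| = |w - 1| * (w + 1) := by
    rw [hwv, ← abs_of_nonneg (by linarith : 0 ≤ w + 1), ← abs_mul]
    ring_nf
  -- AM-GM, together with `(w + 1)² ≤ 2 (v + 1)`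
  have hamgm : 2 * ε * (|w - 1| * (w + 1)) ≤ (w - 1) ^ 2 + ε ^ 2 * (2 * (v + 1)) := by
    nlinarith [sq_nonneg (|w - 1| - ε * (w + 1)), sq_abs (w - 1), sq_nonneg (w - 1)]
  rw [habs, ← sub_le_iff_le_add', le_div_iff₀ (by positivity)]
  nlinarith

lemma tendsto_integral_exp_mul_max_sub_sub_one {Ω : Type*} {mΩ : MeasurableSpace Ω}
    {μ : Measure Ω} {g : Ω → ℝ} (hg : Measurable g) (hg0 : 0 ≤ g)
    {α : ℝ} (hα : 0 ≤ α) (hexp : Integrable (fun y ↦ exp (α * g y)) μ) :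
    Tendsto (fun M : ℝ ↦ ∫ y, (exp (α * max (g y - M) 0) - 1) ∂μ) atTop (𝓝 0) := by
  suffices Tendsto (fun M : ℝ ↦ ∫ y, (exp (α * max (g y - M) 0) - 1) ∂μ) atTop
      (𝓝 (∫ _, 0 ∂μ)) by simpa
  refine tendsto_integral_filter_of_dominated_convergence _ (.of_forall fun M ↦ by fun_prop)
    ((eventually_ge_atTop 0).mono fun M hM ↦ ae_of_all _ fun y ↦ ?_) hexp
    (ae_of_all _ fun y ↦ ?_)
  · have h1 : 1 ≤ exp (α * max (g y - M) 0) := one_le_exp (by positivity)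
    have h2 : exp (α * max (g y - M) 0) ≤ exp (α * g y) :=
      exp_le_exp.2 (mul_le_mul_of_nonneg_left (max_le (by linarith) (hg0 y)) hα)
    rw [Real.norm_of_nonneg (by linarith)]
    linarith
  · refine tendsto_const_nhds.congr' ((eventually_ge_atTop (g y)).mono fun M hM ↦ ?_)
    simp [max_eq_right (sub_nonpos.2 hM)]

section FiniteMeasure

variable {Ω : Type*} {mΩ : MeasurableSpace Ω} {μ ν : Measure Ω}
  [IsFiniteMeasure μ] [IsFiniteMeasure ν]

lemma integrable_klFun_rnDeriv_of_klDiv_ne_top (h : klDiv ν μ ≠ ∞) :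
    Integrable (fun y ↦ klFun (ν.rnDeriv μ y).toReal) μ :=
  (integrable_klFun_rnDeriv_iff (klDiv_ne_top_iff.1 h).1).2 (klDiv_ne_top_iff.1 h).2

lemma abs_integral_sub_integral_le (hνμ : ν ≪ μ) {f : Ω → ℝ} (hf : Measurable f) {C : ℝ}
    (hfC : ∀ y, ‖f y‖ ≤ C) :
    |∫ y, f y ∂ν - ∫ y, f y ∂μ| ≤ C * ∫ y, |(ν.rnDeriv μ y).toReal - 1| ∂μ := by
  have hfμ : Integrable f μ := .of_bound hf.aestronglyMeasurable C (ae_of_all _ hfC)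
  have hFf : Integrable (fun y ↦ (ν.rnDeriv μ y).toReal * f y) μ :=
    (integrable_toReal_rnDeriv_mul_iff hνμ).2
      (.of_bound hf.aestronglyMeasurable C (ae_of_all _ hfC))
  rw [← integral_toReal_rnDeriv_mul hνμ, ← integral_sub hFf hfμ, ← integral_const_mul]
  refine abs_integral_le_integral_abs.trans <| integral_mono (hFf.sub hfμ).abs
    ((Measure.integrable_toReal_rnDeriv.sub (integrable_const 1)).abs.const_mul C) fun y ↦ ?_
  rw [← sub_one_mul, abs_mul, mul_comm]
  exact mul_le_mul_of_nonneg_right ((Real.norm_eq_abs _).symm.trans_le (hfC y)) (abs_nonneg _)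

/-- The inequality behind the Donsker–Varadhan formula, for unbounded `φ ≥ 0`. -/
lemma mul_integral_le_integral_exp_mul_sub_one_add_toReal_klDiv (h : klDiv ν μ ≠ ∞)
    {φ : Ω → ℝ} (hφ : Measurable φ) (hφ0 : 0 ≤ φ) {α : ℝ} (hα : 0 < α)
    (hexp : Integrable (fun y ↦ exp (α * φ y)) μ) :
    Integrable φ ν ∧ α * ∫ y, φ y ∂ν ≤ ∫ y, (exp (α * φ y) - 1) ∂μ + (klDiv ν μ).toReal := by
  have hνμ : ν ≪ μ := (klDiv_ne_top_iff.1 h).1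
  set F : Ω → ℝ := fun y ↦ (ν.rnDeriv μ y).toReal
  have hK := integrable_klFun_rnDeriv_of_klDiv_ne_top h
  have hyoung : ∀ y, α * φ y * F y ≤ (exp (α * φ y) - 1) + klFun (F y) := fun y ↦
    mul_le_exp_sub_one_add_klFun _ ENNReal.toReal_nonneg
  have hexp1 : Integrable (fun y ↦ exp (α * φ y) - 1) μ := hexp.sub (integrable_const 1)
  have hmaj : Integrable (fun y ↦ (exp (α * φ y) - 1) + klFun (F y)) μ := hexp1.add hK
  have hFφ : Integrable (fun y ↦ F y * (α * φ y)) μ := by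
    refine hmaj.mono' (by fun_prop) (ae_of_all _ fun y ↦ ?_)
    rw [Real.norm_of_nonneg (mul_nonneg ENNReal.toReal_nonneg (mul_nonneg hα.le (hφ0 y))),
      mul_comm]
    exact hyoung y
  have hαφ : Integrable (fun y ↦ α * φ y) ν := (integrable_toReal_rnDeriv_mul_iff hνμ).1 hFφ
  refine ⟨by simpa [hα.ne'] using hαφ.const_mul α⁻¹, ?_⟩
  rw [← integral_const_mul, ← integral_toReal_rnDeriv_mul hνμ,
    toReal_klDiv_eq_integral_klFun hνμ, ← integral_add hexp1 hK]
  exact integral_mono hFφ hmaj fun y ↦ by rw [mul_comm]; exact hyoung y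

/-- Splitting `g = min g M + max (g - M) 0`, the bounded part is controlled by the `L¹` distance
of the density to `1` and the tail by the entropy inequality. -/
lemma abs_integral_sub_integral_le_of_integrable_exp (h : klDiv ν μ ≠ ∞) {g : Ω → ℝ}
    (hg : Measurable g) (hg0 : 0 ≤ g) {α : ℝ} (hα : 0 < α)
    (hexp : Integrable (fun y ↦ exp (α * g y)) μ) {M : ℝ} (hM : 0 ≤ M) :
    |∫ y, g y ∂ν - ∫ y, g y ∂μ| ≤ M * ∫ y, |(ν.rnDeriv μ y).toReal - 1| ∂μ
      + (2 * ∫ y, (exp (α * max (g y - M) 0) - 1) ∂μ + (klDiv ν μ).toReal) / α := by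
  set tail : Ω → ℝ := fun y ↦ max (g y - M) 0
  set T := ∫ y, (exp (α * tail y) - 1) ∂μ
  have htail : Measurable tail := by fun_prop
  have htail0 : 0 ≤ tail := fun y ↦ le_max_right _ _
  have hexp_tail : Integrable (fun y ↦ exp (α * tail y)) μ := by
    refine hexp.mono' (by fun_prop) (ae_of_all _ fun y ↦ ?_)
    rw [Real.norm_of_nonneg (exp_pos _).le]
    exact exp_le_exp.2 (mul_le_mul_of_nonneg_left (max_le (by linarith) (hg0 y)) hα.le)
  obtain ⟨hν_int, hν_le⟩ :=
    mul_integral_le_integral_exp_mul_sub_one_add_toReal_klDiv h htail htail0 hα hexp_tail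
  obtain ⟨hμ_int, hμ_le⟩ := mul_integral_le_integral_exp_mul_sub_one_add_toReal_klDiv
    (by simp : klDiv μ μ ≠ ∞) htail htail0 hα hexp_tail
  rw [klDiv_self, ENNReal.toReal_zero, add_zero] at hμ_le
  have htrunc : Measurable fun y ↦ min (g y) M := by fun_prop
  have htrunc_le : ∀ y, ‖min (g y) M‖ ≤ M := fun y ↦ by
    rw [Real.norm_of_nonneg (le_min (hg0 y) hM)]
    exact min_le_right _ _
  have hsplit : ∀ (ρ : Measure Ω) [IsFiniteMeasure ρ], Integrable tail ρ →
      ∫ y, g y ∂ρ = ∫ y, min (g y) M ∂ρ + ∫ y, tail y ∂ρ := fun ρ _ hρ ↦ by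
    rw [← integral_add (.of_bound htrunc.aestronglyMeasurable M (ae_of_all _ htrunc_le)) hρ]
    congr with y
    rcases le_total (g y) M with hy | hy <;> simp [tail, hy]
  have hbdd := abs_integral_sub_integral_le (klDiv_ne_top_iff.1 h).1 htrunc htrunc_le
  have hν_tail : ∫ y, tail y ∂ν ≤ (T + (klDiv ν μ).toReal) / α := by
    rw [le_div_iff₀ hα]; linarith
  have hμ_tail : ∫ y, tail y ∂μ ≤ T / α := by
    rw [le_div_iff₀ hα]; linarith
  have hν_tail0 : 0 ≤ ∫ y, tail y ∂ν := integral_nonneg htail0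
  have hμ_tail0 : 0 ≤ ∫ y, tail y ∂μ := integral_nonneg htail0
  rw [hsplit ν hν_int, hsplit μ hμ_int, show (2 * T + (klDiv ν μ).toReal) / α
    = (T + (klDiv ν μ).toReal) / α + T / α by ring]
  rw [abs_le] at hbdd ⊢
  constructor <;> linarith [hbdd.1, hbdd.2]

end FiniteMeasure

section ProbabilityMeasure

variable {Ω : Type*} {mΩ : MeasurableSpace Ω} {μ ν : Measure Ω}
  [IsProbabilityMeasure μ] [IsProbabilityMeasure ν]

lemma relEntropy_eq_klDiv : relEntropy ν μ = klDiv ν μ := by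
  rw [relEntropy, klDiv_eq_integral_klFun]
  by_cases hνμ : ν ≪ μ
  swap
  · simp [hνμ]
  rw [← integrable_rnDeriv_mul_log_iff hνμ]
  split_ifs with h
  · have hF : ∫ y, (ν.rnDeriv μ y).toReal ∂μ = 1 := by
      simp [Measure.integral_toReal_rnDeriv hνμ]
    have hFlogF1 : Integrable
        (fun y ↦ (ν.rnDeriv μ y).toReal * log (ν.rnDeriv μ y).toReal + 1) μ :=
      h.2.add (integrable_const 1)
    have hkl : ∫ y, klFun (ν.rnDeriv μ y).toReal ∂μ
        = ∫ y, (ν.rnDeriv μ y).toReal * log (ν.rnDeriv μ y).toReal ∂μ := by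
      simp only [klFun_apply]
      rw [integral_sub hFlogF1 Measure.integrable_toReal_rnDeriv,
        integral_add h.2 (integrable_const 1), hF]
      simp
    rw [← hkl, EReal.coe_ennreal_ofReal, max_eq_left]
    exact integral_nonneg fun _ ↦ klFun_nonneg ENNReal.toReal_nonneg
  · simp

lemma integral_abs_toReal_rnDeriv_sub_one_le (h : klDiv ν μ ≠ ∞) {ε : ℝ} (hε : 0 < ε) :
    ∫ y, |(ν.rnDeriv μ y).toReal - 1| ∂μ ≤ 2 * ε + (klDiv ν μ).toReal / (2 * ε) := by
  have hνμ : ν ≪ μ := (klDiv_ne_top_iff.1 h).1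
  have hF : Integrable (fun y ↦ (ν.rnDeriv μ y).toReal + 1) μ :=
    Measure.integrable_toReal_rnDeriv.add (integrable_const 1)
  have hK := (integrable_klFun_rnDeriv_of_klDiv_ne_top h).div_const (2 * ε)
  calc ∫ y, |(ν.rnDeriv μ y).toReal - 1| ∂μ
      ≤ ∫ y, (ε * ((ν.rnDeriv μ y).toReal + 1) + klFun (ν.rnDeriv μ y).toReal / (2 * ε)) ∂μ :=
        integral_mono (Measure.integrable_toReal_rnDeriv.sub (integrable_const 1)).abs
          ((hF.const_mul ε).add hK) fun y ↦ abs_sub_one_le_klFun ENNReal.toReal_nonneg hε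
    _ = 2 * ε + (klDiv ν μ).toReal / (2 * ε) := by
        rw [integral_add (hF.const_mul ε) hK, integral_const_mul, integral_div,
          integral_add Measure.integrable_toReal_rnDeriv (integrable_const 1),
          Measure.integral_toReal_rnDeriv hνμ, toReal_klDiv_eq_integral_klFun hνμ]
        simp only [probReal_univ, integral_const, smul_eq_mul, mul_one, add_left_inj]
        ring

/-- Pinsker's inequality, with constant `2` in place of the optimal `√2`. -/
lemma integral_abs_toReal_rnDeriv_sub_one_le_two_mul_sqrt (h : klDiv ν μ ≠ ∞) :
    ∫ y, |(ν.rnDeriv μ y).toReal - 1| ∂μ ≤ 2 * √(klDiv ν μ).toReal := by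
  rcases (ENNReal.toReal_nonneg : 0 ≤ (klDiv ν μ).toReal).eq_or_lt with hK | hK
  · rw [← hK, sqrt_zero, mul_zero]
    refine le_of_forall_pos_le_add fun ε hε ↦ ?_
    have := integral_abs_toReal_rnDeriv_sub_one_le h (half_pos hε)
    rw [← hK, zero_div, add_zero, mul_div_cancel₀ _ two_ne_zero] at this
    linarith
  · have hs : 0 < √(klDiv ν μ).toReal := sqrt_pos.2 hK
    convert integral_abs_toReal_rnDeriv_sub_one_le h (half_pos hs) using 1
    field_simp
    rw [sq_sqrt hK.le]
    ring

end ProbabilityMeasure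

section Sequence

variable {Ω ι : Type*} {mΩ : MeasurableSpace Ω} {μ : Measure Ω} [IsProbabilityMeasure μ]
  {l : Filter ι} {ν : ι → Measure Ω} [∀ i, IsProbabilityMeasure (ν i)]

lemma tendsto_integral_abs_toReal_rnDeriv_sub_one
    (hKL : Tendsto (fun i ↦ klDiv (ν i) μ) l (𝓝 0)) :
    Tendsto (fun i ↦ ∫ y, |((ν i).rnDeriv μ y).toReal - 1| ∂μ) l (𝓝 0) := by
  have hK : Tendsto (fun i ↦ (klDiv (ν i) μ).toReal) l (𝓝 0) := by
    simpa [Function.comp_def] using (ENNReal.tendsto_toReal ENNReal.zero_ne_top).comp hKL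
  refine squeeze_zero' (.of_forall fun i ↦ integral_nonneg fun y ↦ abs_nonneg _)
    ((hKL.eventually_ne ENNReal.zero_ne_top).mono fun i hi ↦
      integral_abs_toReal_rnDeriv_sub_one_le_two_mul_sqrt hi) ?_
  simpa using (hK.sqrt).const_mul 2

lemma tendsto_integral_of_tendsto_klDiv (hKL : Tendsto (fun i ↦ klDiv (ν i) μ) l (𝓝 0))
    {f : Ω → ℝ} (hf : Measurable f) {C : ℝ} (hfC : ∀ y, ‖f y‖ ≤ C) :
    Tendsto (fun i ↦ ∫ y, f y ∂ν i) l (𝓝 (∫ y, f y ∂μ)) := by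
  rw [tendsto_iff_norm_sub_tendsto_zero]
  refine squeeze_zero' (.of_forall fun i ↦ norm_nonneg _)
    ((hKL.eventually_ne ENNReal.zero_ne_top).mono fun i hi ↦
      abs_integral_sub_integral_le (klDiv_ne_top_iff.1 hi).1 hf hfC) ?_
  simpa using (tendsto_integral_abs_toReal_rnDeriv_sub_one hKL).const_mul C

lemma tendsto_integral_of_tendsto_klDiv_of_integrable_exp
    (hKL : Tendsto (fun i ↦ klDiv (ν i) μ) l (𝓝 0)) {g : Ω → ℝ} (hg : Measurable g)
    (hg0 : 0 ≤ g) {α : ℝ} (hα : 0 < α) (hexp : Integrable (fun y ↦ exp (α * g y)) μ) :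
    Tendsto (fun i ↦ ∫ y, g y ∂ν i) l (𝓝 (∫ y, g y ∂μ)) := by
  have hK : Tendsto (fun i ↦ (klDiv (ν i) μ).toReal) l (𝓝 0) := by
    simpa [Function.comp_def] using (ENNReal.tendsto_toReal ENNReal.zero_ne_top).comp hKL
  rw [Metric.tendsto_nhds]
  intro ε hε
  obtain ⟨M, hT, hM⟩ := ((tendsto_integral_exp_mul_max_sub_sub_one hg hg0 hα.le hexp
    |>.eventually (gt_mem_nhds (by positivity : 0 < ε * α / 2))).and
      (eventually_ge_atTop 0)).exists
  set T := ∫ y, (exp (α * max (g y - M) 0) - 1) ∂μ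
  have hbound : Tendsto (fun i ↦ M * ∫ y, |((ν i).rnDeriv μ y).toReal - 1| ∂μ
      + (2 * T + (klDiv (ν i) μ).toReal) / α) l (𝓝 (M * 0 + (2 * T + 0) / α)) :=
    ((tendsto_integral_abs_toReal_rnDeriv_sub_one hKL).const_mul M).add
      ((tendsto_const_nhds.add hK).div_const α)
  have hlim : M * 0 + (2 * T + 0) / α < ε := by
    rw [mul_zero, zero_add, add_zero, div_lt_iff₀ hα]
    linarith
  filter_upwards [hbound.eventually_lt_const hlim, hKL.eventually_ne ENNReal.zero_ne_top]
    with i hi hne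
  exact (abs_integral_sub_integral_le_of_integrable_exp hne hg hg0 hα hexp hM).trans_lt hi

end Sequence

end InformationTheory

theorem stmt15_general {X : Type*} [MetricSpace X] [MeasurableSpace X] [BorelSpace X]
    (p : ℝ) (μ : Measure X) [IsProbabilityMeasure μ]
    (ν : ℕ → Measure X) [∀ n, IsProbabilityMeasure (ν n)]
    (x : X) (α : ℝ) (hα : 0 < α)
    (hexp : Integrable (fun y => Real.exp (α * dist x y ^ p)) μ)
    (hH : Tendsto (fun n => relEntropy (ν n) μ) atTop (𝓝 (0 : EReal))) :
    WassTendsto p ν μ := by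
  have hKL : Tendsto (fun n ↦ klDiv (ν n) μ) atTop (𝓝 0) := by
    rw [← EReal.tendsto_coe_ennreal, EReal.coe_ennreal_zero]
    simpa [relEntropy_eq_klDiv] using hH
  refine ⟨fun f ↦ tendsto_integral_of_tendsto_klDiv hKL f.continuous.measurable
    f.norm_coe_le_norm, x, ?_⟩
  exact tendsto_integral_of_tendsto_klDiv_of_integrable_exp hKL
    ((continuous_const.dist continuous_id).measurable.pow_const p)
    (fun y ↦ rpow_nonneg dist_nonneg p) hα hexp

/-- If `μ` has a finite `L^p`-exponential moment and `H(ν_n | μ) → 0`, then `ν_n → μ`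
in the `p`-Wasserstein topology. -/
theorem stmt15 {X : Type*} [MetricSpace X] [MeasurableSpace X] [BorelSpace X]
    (p : ℝ) (hp : 1 ≤ p) (μ : Measure X) [IsProbabilityMeasure μ]
    (ν : ℕ → Measure X) [∀ n, IsProbabilityMeasure (ν n)]
    (x : X) (α : ℝ) (hα : 0 < α)
    (hexp : Integrable (fun y => Real.exp (α * dist x y ^ p)) μ)
    (hH : Tendsto (fun n => relEntropy (ν n) μ) atTop (𝓝 (0 : EReal))) :
    WassTendsto p ν μ :=
  stmt15_general p μ ν x α hα hexp hH
end
end
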